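/- arXiv:1104.4099 — 7 statements merged into one kernel-verified Lean document; each statement's English description precedes it below -/
import Mathlib

section
/- Let n ≥ 4 and let i₁ < j₁ and i₂ < j₂ be indices in {1,…,n}. Then the number of permutations σ ∈ S_n satisfying both σ⁻¹(i₁) > σ⁻¹(j₁) and σ(i₂) > σ(j₂) equals (n-3)!·(j₁-i₁-1)(j₂-i₂-1) + (n-2)!·(n²-n+2)/4. -/
/-!
Write `x = σ i₂`, `y = σ j₂`. For the `σ` with `x, y ∉ {i₁, j₁}`, multiplying by the
transposition `(i₁ j₁)` on the left toggles `σ⁻¹ j₁ < σ⁻¹ i₁` without moving `x, y`, and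
multiplying by `(i₂ j₂)` on the right toggles `σ j₂ < σ i₂`; so exactly a quarter of these
`(n - 2)(n - 3) (n - 2)!` permutations are counted. For every other counted `σ`, `x` or `y` lies in
`{i₁, j₁}`, which fixes the position of that value; the condition then bounds `y` (or `x`) and the
position of the other value, and each admissible choice of the two is realised by `(n - 3)!`
permutations, except `(x, y) = (j₁, i₁)`, which satisfies the condition outright and contributes
`(n - 2)!`.
-/

open Finset Equiv Function

section PermCount
variable {α : Type*} [Fintype α] [DecidableEq α]

theorem card_perm_forall_mem_apply_eq_self (s : Finset α) :
    #{σ : Perm α | ∀ i ∈ s, σ i = i} = (Fintype.card α - #s).factorial := by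
  rw [← Fintype.card_subtype, ← card_compl, ← Fintype.card_coe sᶜ, ← Fintype.card_perm]
  refine (Fintype.card_congr ((Perm.subtypeEquivSubtypePerm (· ∈ sᶜ)).trans
    (subtypeEquivRight fun σ => ?_))).symm
  simp

theorem card_perm_forall_mem_apply_eq (s : Finset α) {f : α → α} (hf : Set.InjOn f s) :
    #{σ : Perm α | ∀ i ∈ s, σ i = f i} = (Fintype.card α - #s).factorial := by
  obtain ⟨g, hg⟩ := exists_equiv_extend_of_card_eq (t := univ) (card_univ).symm
    (subset_univ _) hf
  let σ₀ : Perm α := g.trans (Equiv.subtypeUnivEquiv mem_univ)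
  have hσ₀ : ∀ i ∈ s, σ₀ i = f i := hg
  rw [← card_perm_forall_mem_apply_eq_self s]
  refine card_nbij' (σ₀⁻¹ * ·) (σ₀ * ·) ?_ ?_ (fun σ _ => by simp) (fun σ _ => by simp)
  · intro σ hσ
    simp only [coe_filter, mem_univ, true_and, Set.mem_ofPred_eq, Perm.mul_apply] at hσ ⊢
    intro i hi
    rw [Perm.inv_eq_iff_eq, hσ i hi, hσ₀ i hi]
  · intro σ hσ
    simp only [coe_filter, mem_univ, true_and, Set.mem_ofPred_eq, Perm.mul_apply] at hσ ⊢
    intro i hi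
    rw [hσ i hi, hσ₀ i hi]

theorem card_perm_apply_eq_apply_eq {c d x y : α} (hcd : c ≠ d) (hxy : x ≠ y) :
    #{σ : Perm α | σ c = x ∧ σ d = y} = (Fintype.card α - 2).factorial := by
  have hf : Set.InjOn (fun i => if i = c then x else y) ({c, d} : Finset α) := by
    intro i hi j hj
    grind
  rw [← card_pair hcd, ← card_perm_forall_mem_apply_eq _ hf]
  congr 1
  ext σ
  simp [hcd.symm]

theorem card_perm_apply_eq_apply_eq_apply_eq {c d p x y z : α} (hcd : c ≠ d) (hcp : c ≠ p)
    (hdp : d ≠ p) (hxy : x ≠ y) (hxz : x ≠ z) (hyz : y ≠ z) :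
    #{σ : Perm α | σ c = x ∧ σ d = y ∧ σ p = z} = (Fintype.card α - 3).factorial := by
  have hf : Set.InjOn (fun i => if i = c then x else if i = d then y else z)
      ({c, d, p} : Finset α) := by
    intro i hi j hj
    grind
  have hcard : #({c, d, p} : Finset α) = 3 := by grind
  rw [← hcard, ← card_perm_forall_mem_apply_eq _ hf]
  congr 1
  ext σ
  simp [hcd.symm, hcp.symm, hdp.symm]

theorem card_perm_apply_pair_mem {c d : α} (hcd : c ≠ d) {R : Finset (α × α)}
    (hR : ∀ r ∈ R, r.1 ≠ r.2) :
    #{σ : Perm α | (σ c, σ d) ∈ R} = #R * (Fintype.card α - 2).factorial := by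
  rw [card_eq_sum_card_fiberwise (f := fun σ => (σ c, σ d)) (t := R)
    (fun σ hσ => by simpa using hσ), ← smul_eq_mul, ← sum_const]
  refine sum_congr rfl fun r hr => ?_
  rw [← card_perm_apply_eq_apply_eq hcd (hR r hr), filter_filter]
  congr 1
  ext σ
  simp only [mem_filter, mem_univ, true_and, Prod.ext_iff]
  constructor
  · exact And.right
  · rintro ⟨hσc, hσd⟩
    exact ⟨by simpa [hσc, hσd], hσc, hσd⟩

theorem card_perm_apply_eq_apply_mem_inv_apply_mem {c d x z : α} {Y P : Finset α}
    (hcd : c ≠ d) (hc : c ∉ P) (hd : d ∉ P) (hx : x ∉ Y) (hz : z ∉ Y) (hxz : x ≠ z) :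
    #{σ : Perm α | σ c = x ∧ σ d ∈ Y ∧ σ⁻¹ z ∈ P}
      = #Y * #P * (Fintype.card α - 3).factorial := by
  rw [card_eq_sum_card_fiberwise (f := fun σ => (σ d, σ⁻¹ z)) (t := Y ×ˢ P)
    (fun σ hσ => by simp_all), ← card_product, ← smul_eq_mul, ← sum_const]
  refine sum_congr rfl fun ⟨y, p⟩ hr => ?_
  obtain ⟨hy, hp⟩ := mem_product.mp hr
  rw [← card_perm_apply_eq_apply_eq_apply_eq hcd (ne_of_mem_of_not_mem hp hc).symm
    (ne_of_mem_of_not_mem hp hd).symm (ne_of_mem_of_not_mem hy hx).symm hxz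
    (ne_of_mem_of_not_mem hy hz), filter_filter]
  congr 1
  ext σ
  simp only [mem_filter, mem_univ, true_and, Prod.mk.injEq, Perm.inv_eq_iff_eq]
  constructor
  · rintro ⟨⟨hσc, -⟩, hσd, rfl⟩
    exact ⟨hσc, hσd, rfl⟩
  · rintro ⟨hσc, hσd, rfl⟩
    exact ⟨⟨hσc, hσd ▸ hy, by simpa⟩, hσd, rfl⟩

end PermCount

theorem two_mul_card_filter_of_involutive {β : Type*} {s : Finset β} {p : β → Prop}
    [DecidablePred p] {f : β → β} (hf : Involutive f) (hs : ∀ x ∈ s, f x ∈ s)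
    (hp : ∀ x ∈ s, p (f x) ↔ ¬p x) :
    2 * #(s.filter p) = #s := by
  suffices #(s.filter p) = #(s.filter fun x => ¬p x) by
    rw [two_mul]
    nth_rw 2 [this]
    exact card_filter_add_card_filter_not p
  refine card_nbij' f f (fun x hx => ?_) (fun x hx => ?_) (fun x _ => hf x) (fun x _ => hf x)
  · simp only [coe_filter, Set.mem_ofPred_eq] at hx ⊢
    exact ⟨hs x hx.1, fun h => (hp x hx.1).mp h hx.2⟩
  · simp only [coe_filter, Set.mem_ofPred_eq] at hx ⊢
    exact ⟨hs x hx.1, (hp x hx.1).mpr hx.2⟩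

theorem four_mul_card_perm_inv_lt_apply_lt_of_apply_notMem {α : Type*} [Fintype α]
    [DecidableEq α] [LinearOrder α] {a b c d : α} (hab : a ≠ b) (hcd : c ≠ d) :
    4 * #{σ : Perm α | (σ⁻¹ b < σ⁻¹ a ∧ σ d < σ c) ∧ σ c ∉ ({a, b} : Finset α) ∧
        σ d ∉ ({a, b} : Finset α)}
      = (Fintype.card α - 2) * (Fintype.card α - 3) * (Fintype.card α - 2).factorial := by
  set U : Finset (Perm α) := {σ | σ c ∉ ({a, b} : Finset α) ∧ σ d ∉ ({a, b} : Finset α)}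
  set T := U.filter fun σ => σ d < σ c
  have hT : 2 * #T = #U := by
    refine two_mul_card_filter_of_involutive (f := (· * swap c d)) (fun σ => by simp)
      (fun σ hσ => ?_) (fun σ hσ => ?_)
    · simp_all [U, swap_apply_left, swap_apply_right]
    · have hne : σ c ≠ σ d := σ.injective.ne hcd
      simp [swap_apply_left, swap_apply_right, hne.le_iff_lt]
  have hS : 2 * #(T.filter fun σ => σ⁻¹ b < σ⁻¹ a) = #T := by
    refine two_mul_card_filter_of_involutive (f := (swap a b * ·)) (fun σ => by simp [← mul_assoc])
      (fun σ hσ => ?_) (fun σ hσ => ?_)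
    · simp only [T, U, mem_filter, mem_univ, true_and, mem_insert, mem_singleton,
        not_or] at hσ ⊢
      simp [swap_apply_of_ne_of_ne, hσ]
    · have hne : σ.symm a ≠ σ.symm b := σ.symm.injective.ne hab
      simp [mul_inv_rev, swap_apply_left, swap_apply_right, hne.le_iff_lt]
  have hU : #U = (Fintype.card α - 2) * (Fintype.card α - 3) * (Fintype.card α - 2).factorial := by
    have hR : ∀ r ∈ ({a, b}ᶜ : Finset α).offDiag, r.1 ≠ r.2 := fun r hr => (mem_offDiag.mp hr).2.2
    have hs : #({a, b}ᶜ : Finset α) = Fintype.card α - 2 := by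
      rw [card_compl, card_pair hab]
    calc #U = #({a, b}ᶜ : Finset α).offDiag * (Fintype.card α - 2).factorial := by
          rw [← card_perm_apply_pair_mem hcd hR]
          congr 1
          ext σ
          simp [U, hcd]
      _ = _ := by rw [offDiag_card, hs, ← Nat.mul_sub_one, Nat.sub_sub]
  rw [← hU, ← hT, ← hS, ← mul_assoc, filter_filter, filter_filter]
  congr 2
  ext σ
  simp only [mem_filter, mem_univ, true_and]
  tauto

section Pieces
variable {n : ℕ} {i₁ j₁ i₂ j₂ : Fin n}

theorem card_perm_inv_lt_apply_lt_eq_sum_pieces (h₁ : i₁ < j₁) (h₂ : i₂ < j₂) :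
    #{σ : Perm (Fin n) | σ⁻¹ j₁ < σ⁻¹ i₁ ∧ σ j₂ < σ i₂} =
      #{σ : Perm (Fin n) | σ i₂ = j₁ ∧ σ j₂ = i₁}
      + #{σ : Perm (Fin n) | σ i₂ = i₁ ∧ σ j₂ ∈ Iio i₁ ∧ σ⁻¹ j₁ ∈ Iio i₂}
      + #{σ : Perm (Fin n) | σ j₂ = i₁ ∧ σ i₂ ∈ (Ioi i₁).erase j₁ ∧ σ⁻¹ j₁ ∈ (Iio j₂).erase i₂}
      + #{σ : Perm (Fin n) | σ i₂ = j₁ ∧ σ j₂ ∈ (Iio j₁).erase i₁ ∧ σ⁻¹ i₁ ∈ (Ioi i₂).erase j₂}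
      + #{σ : Perm (Fin n) | σ j₂ = j₁ ∧ σ i₂ ∈ Ioi j₁ ∧ σ⁻¹ i₁ ∈ Ioi j₂}
      + #{σ : Perm (Fin n) | (σ⁻¹ j₁ < σ⁻¹ i₁ ∧ σ j₂ < σ i₂) ∧
          σ i₂ ∉ ({i₁, j₁} : Finset (Fin n)) ∧ σ j₂ ∉ ({i₁, j₁} : Finset (Fin n))} := by
  simp only [card_eq_sum_ones, sum_filter, ← sum_add_distrib]
  refine sum_congr rfl fun σ _ => ?_
  simp only [mem_Iio, mem_Ioi, mem_erase, mem_insert, mem_singleton]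
  split_ifs <;> grind [Perm.eq_inv_iff_eq]

theorem card_perm_inv_lt_apply_lt_eq_add_card_generic (h₁ : i₁ < j₁) (h₂ : i₂ < j₂) :
    #{σ : Perm (Fin n) | σ⁻¹ j₁ < σ⁻¹ i₁ ∧ σ j₂ < σ i₂} =
      (n - 2).factorial + i₁ * i₂ * (n - 3).factorial
      + (n - 1 - i₁ - 1) * (j₂ - 1) * (n - 3).factorial
      + (j₁ - 1) * (n - 1 - i₂ - 1) * (n - 3).factorial
      + (n - 1 - j₁) * (n - 1 - j₂) * (n - 3).factorial
      + #{σ : Perm (Fin n) | (σ⁻¹ j₁ < σ⁻¹ i₁ ∧ σ j₂ < σ i₂) ∧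
          σ i₂ ∉ ({i₁, j₁} : Finset (Fin n)) ∧ σ j₂ ∉ ({i₁, j₁} : Finset (Fin n))} := by
  rw [card_perm_inv_lt_apply_lt_eq_sum_pieces h₁ h₂, card_perm_apply_eq_apply_eq h₂.ne h₁.ne',
    card_perm_apply_eq_apply_mem_inv_apply_mem h₂.ne (by simp) (by simp [h₂.le]) (by simp)
      (by simp [h₁.le]) h₁.ne,
    card_perm_apply_eq_apply_mem_inv_apply_mem h₂.ne' (by simp) (by simp) (by simp)
      (by simp) h₁.ne,
    card_perm_apply_eq_apply_mem_inv_apply_mem h₂.ne (by simp) (by simp) (by simp)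
      (by simp) h₁.ne',
    card_perm_apply_eq_apply_mem_inv_apply_mem h₂.ne' (by simp) (by simp [h₂.le]) (by simp)
      (by simp [h₁.le]) h₁.ne',
    card_erase_of_mem (mem_Ioi.mpr h₁), card_erase_of_mem (mem_Iio.mpr h₂),
    card_erase_of_mem (mem_Iio.mpr h₁), card_erase_of_mem (mem_Ioi.mpr h₂)]
  simp only [Fintype.card_fin, Fin.card_Iio, Fin.card_Ioi]

end Pieces

theorem sum_piece_counts_eq {n a b c d G : ℕ} (hn : 4 ≤ n) (hab : a < b) (hbn : b < n)
    (hcd : c < d) (hdn : d < n) (hG : 4 * G = (n - 2) * (n - 3) * (n - 2).factorial) :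
    (n - 2).factorial + a * c * (n - 3).factorial + (n - 1 - a - 1) * (d - 1) * (n - 3).factorial
        + (b - 1) * (n - 1 - c - 1) * (n - 3).factorial
        + (n - 1 - b) * (n - 1 - d) * (n - 3).factorial + G
      = (n - 3).factorial * ((b - a - 1) * (d - c - 1))
        + (n - 2).factorial * (n ^ 2 - n + 2) / 4 := by
  have hfact : (n - 2).factorial = (n - 2) * (n - 3).factorial := by
    rw [show n - 2 = n - 3 + 1 by omega, Nat.factorial_succ]
  have hquad : n ^ 2 - n + 2 = (n - 2) * (n - 3) + 4 * (n - 1) := by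
    obtain ⟨m, rfl⟩ : ∃ m, n = m + 4 := ⟨n - 4, by omega⟩
    simp only [show m + 4 - 2 = m + 2 by omega, show m + 4 - 3 = m + 1 by omega,
      show m + 4 - 1 = m + 3 by omega]
    ring_nf
    omega
  have hdiv : (n - 2).factorial * (n ^ 2 - n + 2)
      = 4 * (G + (n - 1) * (n - 2) * (n - 3).factorial) := by
    rw [hquad, mul_add 4, hG, hfact]
    ring
  rw [hdiv, Nat.mul_div_cancel_left _ (by norm_num), hfact]
  simp only [Nat.sub_sub]
  zify [show 2 ≤ n by omega, show 1 ≤ n by omega, show 1 ≤ b by omega,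
    show 1 ≤ d by omega, show 1 + a + 1 ≤ n by omega, show 1 + c + 1 ≤ n by omega,
    show 1 + b ≤ n by omega, show 1 + d ≤ n by omega, show a + 1 ≤ b by omega,
    show c + 1 ≤ d by omega]
  ring

theorem stmt_5 (n : ℕ) (hn : 4 ≤ n) (i₁ j₁ i₂ j₂ : Fin n)
    (h₁ : i₁ < j₁) (h₂ : i₂ < j₂) :
    (Finset.univ.filter
      (fun σ : Equiv.Perm (Fin n) => σ⁻¹ j₁ < σ⁻¹ i₁ ∧ σ j₂ < σ i₂)).card =
      (n - 3).factorial * (((j₁ : ℕ) - i₁ - 1) * ((j₂ : ℕ) - i₂ - 1)) +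
        (n - 2).factorial * (n ^ 2 - n + 2) / 4 := by
  have hgeneric := four_mul_card_perm_inv_lt_apply_lt_of_apply_notMem h₁.ne h₂.ne
  rw [Fintype.card_fin] at hgeneric
  rw [card_perm_inv_lt_apply_lt_eq_add_card_generic h₁ h₂]
  exact sum_piece_counts_eq hn h₁ j₁.isLt h₂ j₂.isLt hgeneric
end

section
/- Let n ≥ 4 and let i₁ < j₁ and i₂ < j₂ be indices in {1,…,n}. Then the number of permutations σ ∈ S_n satisfying σ⁻¹(i₁) > σ⁻¹(j₁) and σ(j₂) > σ(i₂) equals (n-2)!·(n²-n-2)/4 − (n-3)!·(j₁-i₁-1)(j₂-i₂-1). -/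
/-!
Write `ε₁ σ, ε₂ σ = ±1` for the truth values of the two conditions, so that
`4·[both hold] = 1 + ε₁ + ε₂ + ε₁ε₂`. Left multiplication by a transposition shows
`∑ ε₁ = ∑ ε₂ = 0`; it also cancels the part of `∑ ε₁ε₂` over the permutations with
`σ i₂, σ j₂ ∉ {i₁, j₁}`. The two classes with `{σ i₂, σ j₂} = {i₁, j₁}` contribute `-2 (n-2)!`.
On each of the four other classes one value of `σ` is prescribed, and the sum factors as `(n-3)!`
times a signed count of positions on either side of `i₂` or `j₂` times a signed count of values
on either side of `i₁` or `j₁`; these four products add up to `-4 (n-3)! (j₁-i₁-1)(j₂-i₂-1)`.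
-/

open Finset Equiv Nat

section Counting

variable {α : Type*} [Fintype α] [DecidableEq α]

theorem card_perm_eqOn (s : Finset α) (f : α → α) (hf : Set.InjOn f s) :
    #{σ : Perm α | ∀ x ∈ s, σ x = f x} = (Fintype.card α - #s)! := by
  classical
  let e₀ : (s : Set α) ≃ f '' s := Equiv.Set.imageOfInjOn f s hf
  have hcard_s : Fintype.card (s : Set α) = #s := by simp
  have hcompl_dom : Fintype.card ((s : Set α)ᶜ : Set α) = Fintype.card α - #s := by
    rw [Fintype.card_compl_set, hcard_s]
  have hcompl_cod : Fintype.card ((f '' s)ᶜ : Set α) = Fintype.card α - #s := by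
    rw [Fintype.card_compl_set, ← Fintype.card_congr e₀, hcard_s]
  calc #{σ : Perm α | ∀ x ∈ s, σ x = f x}
      = Fintype.card {σ : Perm α // ∀ x : (s : Set α), σ x = e₀ x} := by
        rw [← Fintype.card_subtype]
        exact Fintype.card_congr (Equiv.subtypeEquivRight fun σ => ⟨fun h x => h x x.2,
          fun h x hx => h ⟨x, hx⟩⟩)
    _ = Fintype.card (((s : Set α)ᶜ : Set α) ≃ ((f '' s)ᶜ : Set α)) :=
        Fintype.card_congr (Equiv.Set.compl e₀)
    _ = (Fintype.card α - #s)! := by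
        rw [Fintype.card_equiv (Fintype.equivOfCardEq (hcompl_dom.trans hcompl_cod.symm)),
          hcompl_dom]

theorem card_perm_apply_eq_pair {x₁ x₂ y₁ y₂ : α} (hx : x₁ ≠ x₂) (hy : y₁ ≠ y₂) :
    #{σ : Perm α | σ x₁ = y₁ ∧ σ x₂ = y₂} = (Fintype.card α - 2)! := by
  have h := card_perm_eqOn {x₁, x₂} (fun x => if x = x₁ then y₁ else y₂)
    (by simp [hx.symm, hy])
  rw [card_pair hx] at h
  rw [← h]
  congr 1
  ext σ
  simp [hx.symm]

theorem card_perm_apply_eq_triple {x₁ x₂ x₃ y₁ y₂ y₃ : α} (hx₁₂ : x₁ ≠ x₂) (hx₁₃ : x₁ ≠ x₃)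
    (hx₂₃ : x₂ ≠ x₃) (hy₁₂ : y₁ ≠ y₂) (hy₁₃ : y₁ ≠ y₃) (hy₂₃ : y₂ ≠ y₃) :
    #{σ : Perm α | σ x₁ = y₁ ∧ σ x₂ = y₂ ∧ σ x₃ = y₃} = (Fintype.card α - 3)! := by
  have h := card_perm_eqOn {x₁, x₂, x₃}
    (fun x => if x = x₁ then y₁ else if x = x₂ then y₂ else y₃)
    (by
      rw [coe_insert, coe_pair, Set.injOn_insert (by simp [hx₁₂, hx₁₃])]
      simp [hx₁₂.symm, hx₁₃.symm, hx₂₃.symm, hy₁₂.symm, hy₁₃.symm, hy₂₃])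
  rw [card_insert_of_notMem (by simp [hx₁₂, hx₁₃]), card_pair hx₂₃] at h
  rw [← h]
  congr 1
  ext σ
  simp [hx₁₂.symm, hx₁₃.symm, hx₂₃.symm]

theorem sum_perm_apply_eq_apply_ne {R : Type*} [CommSemiring R] {p₁ p₂ v₁ v₂ : α}
    (hp : p₁ ≠ p₂) (hv : v₁ ≠ v₂) (F G : α → R) :
    ∑ σ : Perm α with σ p₁ = v₁ ∧ σ p₂ ≠ v₂, F (σ⁻¹ v₂) * G (σ p₂) =
      (Fintype.card α - 3)! * ((∑ p ∈ {p₁, p₂}ᶜ, F p) * ∑ b ∈ {v₁, v₂}ᶜ, G b) := by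
  have hmaps : ∀ σ ∈ ({σ : Perm α | σ p₁ = v₁ ∧ σ p₂ ≠ v₂} : Finset _),
      (σ⁻¹ v₂, σ p₂) ∈ ({p₁, p₂}ᶜ ×ˢ {v₁, v₂}ᶜ : Finset (α × α)) := by
    intro σ hσ
    simp only [mem_filter, mem_univ, true_and] at hσ
    simp only [mem_product, mem_compl, mem_insert, mem_singleton, not_or, Perm.inv_eq_iff_eq,
      hσ.1]
    exact ⟨⟨hv.symm, Ne.symm hσ.2⟩, hσ.1 ▸ σ.injective.ne hp.symm, hσ.2⟩
  rw [sum_mul_sum, ← sum_product', mul_sum, ← sum_fiberwise_of_maps_to hmaps]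
  refine sum_congr rfl fun ⟨p, b⟩ hpb => ?_
  simp only [mem_product, mem_compl, mem_insert, mem_singleton, not_or] at hpb
  obtain ⟨⟨hpp₁, hpp₂⟩, hbv₁, hbv₂⟩ := hpb
  have hfiber : ({σ : Perm α | σ p₁ = v₁ ∧ σ p₂ ≠ v₂} : Finset _).filter
      (fun σ => (σ⁻¹ v₂, σ p₂) = (p, b)) =
        ({σ : Perm α | σ p₁ = v₁ ∧ σ p₂ = b ∧ σ p = v₂} : Finset _) := by
    ext σ
    simp only [mem_filter, mem_univ, true_and, Prod.mk.injEq, Perm.inv_eq_iff_eq]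
    constructor
    · rintro ⟨⟨h₁, -⟩, h₃, h₂⟩
      exact ⟨h₁, h₂, h₃.symm⟩
    · rintro ⟨h₁, h₂, h₃⟩
      exact ⟨⟨h₁, h₂ ▸ hbv₂⟩, h₃.symm, h₂⟩
  rw [sum_congr hfiber fun σ hσ => ?_, sum_const, nsmul_eq_mul,
    card_perm_apply_eq_triple hp (Ne.symm hpp₁) (Ne.symm hpp₂) (Ne.symm hbv₁) hv hbv₂]
  simp only [mem_filter, mem_univ, true_and] at hσ
  rw [hσ.2.1, (Perm.inv_eq_iff_eq).2 hσ.2.2.symm]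

theorem sum_perm_apply_eq {R : Type*} [CommSemiring R] {p₁ p₂ v₁ v₂ : α}
    (hp : p₁ ≠ p₂) (hv : v₁ ≠ v₂) (F G : α → R) :
    ∑ σ : Perm α with σ p₁ = v₁, F (σ⁻¹ v₂) * G (σ p₂) =
      (Fintype.card α - 2)! * (F p₂ * G v₂) +
        (Fintype.card α - 3)! * ((∑ p ∈ {p₁, p₂}ᶜ, F p) * ∑ b ∈ {v₁, v₂}ᶜ, G b) := by
  rw [← sum_filter_add_sum_filter_not _ (fun σ : Perm α => σ p₂ = v₂), filter_filter,
    filter_filter, ← sum_perm_apply_eq_apply_ne hp hv, sum_congr rfl fun σ hσ => ?_, sum_const,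
    nsmul_eq_mul, card_perm_apply_eq_pair hp hv]
  simp only [mem_filter, mem_univ, true_and] at hσ
  rw [hσ.2, (Perm.inv_eq_iff_eq).2 hσ.2.symm]

end Counting

section OrderSign

variable {α : Type*} [LinearOrder α]

def orderSign (x y : α) : ℤ := if x < y then 1 else -1

theorem orderSign_of_lt {x y : α} (h : x < y) : orderSign x y = 1 := if_pos h

theorem orderSign_of_gt {x y : α} (h : y < x) : orderSign x y = -1 := if_neg h.not_gt

theorem orderSign_self (x : α) : orderSign x x = -1 := if_neg (lt_irrefl x)

theorem orderSign_comm_of_ne {x y : α} (h : x ≠ y) : orderSign y x = -orderSign x y := by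
  rcases h.lt_or_gt with h | h
  · rw [orderSign_of_lt h, orderSign_of_gt h]
  · rw [orderSign_of_lt h, orderSign_of_gt h, neg_neg]

theorem four_mul_ite_lt_and_lt (x y z w : α) :
    4 * (if x < y ∧ z < w then 1 else 0 : ℤ) =
      1 + orderSign x y + orderSign z w + orderSign x y * orderSign z w := by
  unfold orderSign
  split_ifs <;> simp_all

theorem sum_orderSign_left [Fintype α] [LocallyFiniteOrderTop α] [LocallyFiniteOrderBot α]
    (c : α) : ∑ x, orderSign c x = #(Ioi c) - #(Iic c) := by
  simp [orderSign, sum_ite, filter_lt_eq_Ioi, filter_ge_eq_Iic, sub_eq_add_neg]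

theorem sum_compl_pair_orderSign_left [Fintype α] [LocallyFiniteOrderTop α]
    [LocallyFiniteOrderBot α] {c d : α} (hcd : c ≠ d) :
    ∑ x ∈ {c, d}ᶜ, orderSign c x = #(Ioi c) - #(Iic c) + 1 - orderSign c d := by
  have h := sum_compl_add_sum {c, d} (orderSign c)
  rw [sum_pair hcd, sum_orderSign_left, orderSign_self] at h
  linarith

theorem Fin.sum_compl_pair_orderSign_left {n : ℕ} {c d : Fin n} (hcd : c ≠ d) :
    ∑ x ∈ {c, d}ᶜ, orderSign c x = n - 2 * (c : ℤ) - 1 - orderSign c d := by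
  rw [_root_.sum_compl_pair_orderSign_left hcd, Fin.card_Ioi, Fin.card_Iic]
  have hIoi : ((n - 1 - c : ℕ) : ℤ) = n - 1 - c := by have := c.isLt; omega
  push_cast [hIoi]
  ring

theorem Fin.sum_compl_pair_orderSign_right {n : ℕ} {c d : Fin n} (hcd : c ≠ d) :
    ∑ x ∈ {c, d}ᶜ, orderSign x c = -(n - 2 * (c : ℤ) - 1 - orderSign c d) := by
  rw [← Fin.sum_compl_pair_orderSign_left hcd, ← sum_neg_distrib]
  refine sum_congr rfl fun x hx => orderSign_comm_of_ne ?_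
  simp only [mem_compl, mem_insert, mem_singleton, not_or] at hx
  exact Ne.symm hx.1

theorem sum_orderSign_inv_mul_eq_zero [Fintype α] {i j : α} (hij : i ≠ j)
    {s : Finset (Perm α)} (g : Perm α → ℤ) (hs : ∀ σ ∈ s, swap i j * σ ∈ s)
    (hg : ∀ σ ∈ s, g (swap i j * σ) = g σ) :
    ∑ σ ∈ s, orderSign (σ⁻¹ i) (σ⁻¹ j) * g σ = 0 := by
  refine sum_involution (fun σ _ => swap i j * σ) (fun σ hσ => ?_) (fun σ _ _ h => ?_) hs
    (fun σ _ => swap_mul_self_mul i j σ)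
  · have hne : σ⁻¹ i ≠ σ⁻¹ j := σ⁻¹.injective.ne hij
    simp only [mul_inv_rev, swap_inv, Perm.mul_apply, swap_apply_left, swap_apply_right,
      hg σ hσ, orderSign_comm_of_ne hne]
    ring
  · have : swap i j = 1 := mul_eq_right.mp h
    exact hij (by simpa using congrArg (fun τ : Perm α => τ j) this)

end OrderSign

section Permutations

variable {α : Type*} [Fintype α] [LinearOrder α]

theorem sum_orderSign_inv_apply {i j : α} (hij : i ≠ j) :
    ∑ σ : Perm α, orderSign (σ⁻¹ i) (σ⁻¹ j) = 0 := by
  simpa using sum_orderSign_inv_mul_eq_zero hij (s := univ) 1 (by simp) (by simp)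

theorem sum_orderSign_apply {i j : α} (hij : i ≠ j) :
    ∑ σ : Perm α, orderSign (σ i) (σ j) = 0 := by
  rw [← sum_orderSign_inv_apply hij]
  exact Fintype.sum_equiv (Equiv.inv (Perm α)) _ _ fun σ => by simp

theorem four_mul_card_filter_lt_and_lt {i₁ j₁ i₂ j₂ : α} (h₁ : i₁ ≠ j₁) (h₂ : i₂ ≠ j₂) :
    4 * (#{σ : Perm α | σ⁻¹ j₁ < σ⁻¹ i₁ ∧ σ i₂ < σ j₂} : ℤ) =
      (Fintype.card α)! +
        ∑ σ : Perm α, orderSign (σ⁻¹ j₁) (σ⁻¹ i₁) * orderSign (σ i₂) (σ j₂) := by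
  rw [natCast_card_filter, mul_sum]
  simp only [four_mul_ite_lt_and_lt, sum_add_distrib, sum_orderSign_inv_apply h₁.symm,
    sum_orderSign_apply h₂, sum_const]
  simp [Fintype.card_perm]

end Permutations

theorem sum_orderSign_inv_mul_orderSign {n : ℕ} {i₁ j₁ i₂ j₂ : Fin n} (h₁ : i₁ < j₁)
    (h₂ : i₂ < j₂) :
    ∑ σ : Perm (Fin n), orderSign (σ⁻¹ j₁) (σ⁻¹ i₁) * orderSign (σ i₂) (σ j₂) =
      -2 * (n - 2)! - 4 * (n - 3)! * (((j₁ : ℤ) - i₁ - 1) * ((j₂ : ℤ) - i₂ - 1)) := by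
  set f := fun σ : Perm (Fin n) => orderSign (σ⁻¹ j₁) (σ⁻¹ i₁) * orderSign (σ i₂) (σ j₂)
  -- classify `σ` by how `{σ i₂, σ j₂}` meets `{i₁, j₁}`
  have hsplit : ∀ σ, f σ = (if σ i₂ = i₁ then f σ else 0) + (if σ i₂ = j₁ then f σ else 0) +
      (if σ j₂ = i₁ ∧ σ i₂ ≠ j₁ then f σ else 0) + (if σ j₂ = j₁ ∧ σ i₂ ≠ i₁ then f σ else 0) +
      (if σ i₂ ≠ i₁ ∧ σ i₂ ≠ j₁ ∧ σ j₂ ≠ i₁ ∧ σ j₂ ≠ j₁ then f σ else 0) := by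
    intro σ
    have := σ.injective.ne h₂.ne
    have := h₁.ne
    split_ifs <;> simp_all
  have hrest : ∑ σ with σ i₂ ≠ i₁ ∧ σ i₂ ≠ j₁ ∧ σ j₂ ≠ i₁ ∧ σ j₂ ≠ j₁, f σ = 0 := by
    refine sum_orderSign_inv_mul_eq_zero h₁.ne' _ (fun σ hσ => ?_) (fun σ hσ => ?_) <;>
      simp only [mem_filter, mem_univ, true_and] at hσ <;>
      simp [swap_apply_of_ne_of_ne, hσ]
  rw [sum_congr rfl fun σ _ => hsplit σ]
  simp only [sum_add_distrib, ← sum_filter, hrest, add_zero]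
  have hinv {σ : Perm (Fin n)} {p v : Fin n} (h : σ p = v) : σ⁻¹ v = p :=
    Perm.inv_eq_iff_eq.2 h.symm
  rw [sum_congr rfl fun σ hσ => show f σ = (orderSign · i₂) (σ⁻¹ j₁) * orderSign i₁ (σ j₂) by
      have h := (mem_filter.1 hσ).2; simp only [f, h, hinv h],
    sum_congr rfl fun σ hσ => show f σ = orderSign i₂ (σ⁻¹ i₁) * orderSign j₁ (σ j₂) by
      have h := (mem_filter.1 hσ).2; simp only [f, h, hinv h],
    sum_congr rfl fun σ hσ => show f σ = (orderSign · j₂) (σ⁻¹ j₁) * (orderSign · i₁) (σ i₂) by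
      have h := (mem_filter.1 hσ).2.1; simp only [f, h, hinv h],
    sum_congr rfl fun σ hσ => show f σ = orderSign j₂ (σ⁻¹ i₁) * (orderSign · j₁) (σ i₂) by
      have h := (mem_filter.1 hσ).2.1; simp only [f, h, hinv h],
    sum_perm_apply_eq h₂.ne h₁.ne (orderSign · i₂) (orderSign i₁),
    sum_perm_apply_eq h₂.ne h₁.ne' (orderSign i₂) (orderSign j₁),
    sum_perm_apply_eq_apply_ne h₂.ne' h₁.ne (orderSign · j₂) (orderSign · i₁),
    sum_perm_apply_eq_apply_ne h₂.ne' h₁.ne' (orderSign j₂) (orderSign · j₁)]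
  simp only [Fin.sum_compl_pair_orderSign_left, Fin.sum_compl_pair_orderSign_right, h₁.ne, h₁.ne',
    h₂.ne, h₂.ne', ne_eq, not_false_eq_true, orderSign_of_lt h₁, orderSign_of_gt h₁,
    orderSign_of_lt h₂, orderSign_of_gt h₂, Fintype.card_fin]
  ring

theorem stmt_6_general (n : ℕ) (i₁ j₁ i₂ j₂ : Fin n)
    (h₁ : i₁ < j₁) (h₂ : i₂ < j₂) :
    ((Finset.univ.filter
      (fun σ : Equiv.Perm (Fin n) => σ⁻¹ j₁ < σ⁻¹ i₁ ∧ σ i₂ < σ j₂)).card : ℤ) =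
      ((n - 2).factorial : ℤ) * ((n : ℤ) ^ 2 - n - 2) / 4 -
        ((n - 3).factorial : ℤ) * (((j₁ : ℕ) : ℤ) - ((i₁ : ℕ) : ℤ) - 1) *
          (((j₂ : ℕ) : ℤ) - ((i₂ : ℕ) : ℤ) - 1) := by
  have hcount := four_mul_card_filter_lt_and_lt h₁.ne h₂.ne
  rw [sum_orderSign_inv_mul_orderSign h₁ h₂, Fintype.card_fin] at hcount
  have hn : 2 ≤ n := by
    have := j₁.isLt
    have : (i₁ : ℕ) < j₁ := h₁
    omega
  obtain ⟨m, rfl⟩ : ∃ m, n = m + 2 := ⟨n - 2, by omega⟩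
  have hfac : ((m + 2)! : ℤ) = (m + 2) * (m + 1) * m ! := by
    push_cast [Nat.factorial_succ]; ring
  rw [Nat.add_sub_cancel, show m + 2 - 3 = m - 1 by omega] at hcount ⊢
  rw [show (m ! : ℤ) * (((m + 2 : ℕ) : ℤ) ^ 2 - (m + 2 : ℕ) - 2) =
      4 * (#{σ : Perm (Fin (m + 2)) | σ⁻¹ j₁ < σ⁻¹ i₁ ∧ σ i₂ < σ j₂} +
        (m - 1)! * ((j₁ - i₁ - 1 : ℤ) * (j₂ - i₂ - 1))) by
      push_cast; linear_combination -hcount - hfac,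
    Int.mul_ediv_cancel_left _ four_ne_zero]
  ring

theorem stmt_6 (n : ℕ) (hn : 4 ≤ n) (i₁ j₁ i₂ j₂ : Fin n)
    (h₁ : i₁ < j₁) (h₂ : i₂ < j₂) :
    ((Finset.univ.filter
      (fun σ : Equiv.Perm (Fin n) => σ⁻¹ j₁ < σ⁻¹ i₁ ∧ σ i₂ < σ j₂)).card : ℤ) =
      ((n - 2).factorial : ℤ) * ((n : ℤ) ^ 2 - n - 2) / 4 -
        ((n - 3).factorial : ℤ) * (((j₁ : ℕ) : ℤ) - ((i₁ : ℕ) : ℤ) - 1) *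
          (((j₂ : ℕ) : ℤ) - ((i₂ : ℕ) : ℤ) - 1) :=
  stmt_6_general n i₁ j₁ i₂ j₂ h₁ h₂
end

section
/- Let n ≥ 4, let i₁ < j₁ and i₂ < j₂ be indices in {1,…,n}, and let b ∉ {i₁, j₁}. Then the number of permutations σ ∈ S_n with σ(i₁) > σ(j₁), σ⁻¹(i₂) = i₁ and σ⁻¹(j₂) = b equals (i₂ − 1)·(n−3)!. -/
/-!
The conditions `σ⁻¹ i₂ = i₁` and `σ⁻¹ j₂ = b` say that `σ i₁ = i₂` and `σ b = j₂`, so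
`σ j₁ < σ i₁` leaves exactly the values `k < i₂` for `σ j₁` (there are `i₂` of them, as `Fin n`
is `0`-indexed). For each such `k` the permutation is prescribed at the three distinct points
`i₁, b, j₁`, and the permutations with prescribed values on a set of size `m` form a coset of
its pointwise stabiliser, which is `Perm` of the complement and has `(n - m)!` elements.
-/

open Finset Equiv Function
open scoped Nat

section PermExtending

variable {α ι : Type*} [Fintype α] [DecidableEq α] [Fintype ι]

lemma Equiv.Perm.card_fixing_range {a : ι → α} (ha : Injective a) :
    #{σ : Perm α | ∀ i, σ (a i) = a i} = (Fintype.card α - Fintype.card ι)! := by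
  let p : α → Prop := fun x => x ∉ Set.range a
  have hfix : #{σ : Perm α | ∀ i, σ (a i) = a i} =
      Fintype.card {σ : Perm α // ∀ x, ¬p x → σ x = x} := by
    rw [Fintype.card_subtype]
    congr 1
    simp [p]
  have hcompl : Fintype.card {x // p x} = Fintype.card α - Fintype.card ι := by
    rw [Fintype.card_subtype_compl, Set.card_range_of_injective ha]
  rw [hfix, ← Fintype.card_congr (Perm.subtypeEquivSubtypePerm p), Fintype.card_perm, hcompl]

lemma Equiv.Perm.card_extending {a v : ι → α} (ha : Injective a) (hv : Injective v) :
    #{σ : Perm α | ∀ i, σ (a i) = v i} = (Fintype.card α - Fintype.card ι)! := by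
  obtain ⟨τ, hτ⟩ := Perm.exists_extending_pair a v ha hv
  rw [← Perm.card_fixing_range ha]
  refine card_equiv (Equiv.mulLeft τ⁻¹) fun σ => ?_
  simp [Equiv.symm_apply_eq, hτ]

end PermExtending

lemma Matrix.injective_vecCons₃ {α : Type*} {x y z : α} (hxy : x ≠ y) (hxz : x ≠ z) (hyz : y ≠ z) :
    Injective ![x, y, z] := by
  intro i j
  fin_cases i <;> fin_cases j <;> simp_all [eq_comm]

theorem stmt_9_general (n : ℕ) (i₁ j₁ i₂ j₂ b : Fin n)
    (h₁ : i₁ < j₁) (h₂ : i₂ < j₂) (hb₁ : b ≠ i₁) (hb₂ : b ≠ j₁) :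
    (Finset.univ.filter
      (fun σ : Equiv.Perm (Fin n) => σ j₁ < σ i₁ ∧ σ⁻¹ i₂ = i₁ ∧ σ⁻¹ j₂ = b)).card =
      (i₂ : ℕ) * (n - 3).factorial := by
  have hvalues : (univ.filter
      fun σ : Perm (Fin n) => σ j₁ < σ i₁ ∧ σ⁻¹ i₂ = i₁ ∧ σ⁻¹ j₂ = b) =
      ({σ : Perm (Fin n) | σ i₁ = i₂ ∧ σ b = j₂ ∧ σ j₁ < i₂} : Finset _) := by
    ext σ
    simp only [mem_filter, mem_univ, true_and, Perm.inv_eq_iff_eq]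
    grind
  have hfiber (k : Fin n) (hk : k < i₂) :
      #{σ : Perm (Fin n) | (σ i₁ = i₂ ∧ σ b = j₂ ∧ σ j₁ < i₂) ∧ σ j₁ = k} = (n - 3)! := by
    have hcount := Perm.card_extending (Matrix.injective_vecCons₃ hb₁.symm h₁.ne hb₂)
      (Matrix.injective_vecCons₃ h₂.ne hk.ne' (hk.trans h₂).ne')
    rw [Fintype.card_fin, Fintype.card_fin] at hcount
    rw [← hcount]
    congr 1
    ext σ
    simp only [mem_filter, mem_univ, true_and, Fin.forall_fin_succ, Matrix.cons_val_zero,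
      Matrix.cons_val_succ, Matrix.cons_val_fin_one, forall_const]
    grind
  rw [hvalues, card_eq_sum_card_fiberwise (f := fun σ : Perm (Fin n) => σ j₁) (t := Iio i₂)
      (fun σ hσ => by simp_all),
    sum_congr rfl fun k hk => by rw [filter_filter, hfiber k (mem_Iio.1 hk)],
    sum_const, Fin.card_Iio, smul_eq_mul]

theorem stmt_9 (n : ℕ) (hn : 4 ≤ n) (i₁ j₁ i₂ j₂ b : Fin n)
    (h₁ : i₁ < j₁) (h₂ : i₂ < j₂) (hb₁ : b ≠ i₁) (hb₂ : b ≠ j₁) :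
    (Finset.univ.filter
      (fun σ : Equiv.Perm (Fin n) => σ j₁ < σ i₁ ∧ σ⁻¹ i₂ = i₁ ∧ σ⁻¹ j₂ = b)).card =
      (i₂ : ℕ) * (n - 3).factorial :=
  stmt_9_general n i₁ j₁ i₂ j₂ b h₁ h₂ hb₁ hb₂
end

section
/- Let n ≥ 2 and let P = (P_{i,j}) be an n×n matrix over ℝ[X₁,…,X_k] such that every entry P_{i,j} is a nonzero polynomial with nonnegative coefficients, and all row sums equal a common polynomial P_n. Then P_n is an eigenvalue of P and its eigenspace is spanned by the all-ones vector. -/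
/-!
Evaluating at a point `y` with positive coordinates turns `P` into a real matrix with positive
entries and common row sum `Pn(y)`, and an eigenvector `v` for `Pn` into an eigenvector `v(y)`
for `Pn(y)`. Then each coordinate of `v(y)` is an average of all coordinates with positive
weights; at a maximal coordinate this forces all coordinates to be equal. So each difference `v i - v j` vanishes on the open positive
orthant, hence is the zero polynomial.
-/

open MvPolynomial
open scoped Matrix

theorem MvPolynomial.eval_pos_of_coeff_nonneg {σ R : Type*} [CommSemiring R] [PartialOrder R]
    [IsStrictOrderedRing R] {p : MvPolynomial σ R} (hp : p ≠ 0) (hcoeff : ∀ m, 0 ≤ coeff m p)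
    {y : σ → R} (hy : ∀ i, 0 < y i) : 0 < eval y p := by
  obtain ⟨m, hm⟩ := ne_zero_iff.mp hp
  have hmonomial_pos (d : σ →₀ ℕ) : 0 < ∏ i ∈ d.support, y i ^ d i :=
    Finset.prod_pos fun i _ => pow_pos (hy i) _
  rw [eval_eq]
  refine Finset.sum_pos' (fun d _ => mul_nonneg (hcoeff d) (hmonomial_pos d).le) ?_
  exact ⟨m, mem_support_iff.mpr hm, mul_pos ((hcoeff m).lt_of_ne' hm) (hmonomial_pos m)⟩

theorem Matrix.apply_eq_of_mulVec_eq_smul_of_pos {ι R : Type*} [Fintype ι] [CommRing R]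
    [LinearOrder R] [IsStrictOrderedRing R] {A : Matrix ι ι R} (hA : ∀ i j, 0 < A i j) {r : R}
    (hrow : ∀ i, ∑ j, A i j = r) {w : ι → R} (hw : A *ᵥ w = r • w) (i j : ι) : w i = w j := by
  have : Nonempty ι := ⟨i⟩
  obtain ⟨i₀, hi₀⟩ := Finite.exists_max w
  have hsum : ∑ b, A i₀ b * (w i₀ - w b) = 0 := by
    have hi₀w := congrFun hw i₀
    simp only [mulVec, dotProduct, Pi.smul_apply, smul_eq_mul] at hi₀w
    simp only [mul_sub, Finset.sum_sub_distrib, ← Finset.sum_mul, hrow, hi₀w, sub_self]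
  have hmax (b : ι) : w b = w i₀ := by
    have hterm := (Finset.sum_eq_zero_iff_of_nonneg fun c _ =>
      mul_nonneg (hA i₀ c).le (sub_nonneg.mpr (hi₀ c))).mp hsum b (Finset.mem_univ b)
    rcases mul_eq_zero.mp hterm with h | h
    · exact absurd h (hA i₀ b).ne'
    · exact (sub_eq_zero.mp h).symm
  rw [hmax i, hmax j]

theorem stmt_10_general (n k : ℕ)
    (P : Matrix (Fin n) (Fin n) (MvPolynomial (Fin k) ℝ))
    (Pn : MvPolynomial (Fin k) ℝ)
    (hne : ∀ i j, P i j ≠ 0)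
    (hnonneg : ∀ i j m, 0 ≤ MvPolynomial.coeff m (P i j))
    (hrow : ∀ i, ∑ j, P i j = Pn) :
    P.mulVec (fun _ => 1) = Pn • ((fun _ => 1) : Fin n → MvPolynomial (Fin k) ℝ) ∧
      ∀ v : Fin n → MvPolynomial (Fin k) ℝ,
        P.mulVec v = Pn • v → ∃ c, v = fun _ => c := by
  refine ⟨funext fun i => by simp [Matrix.mulVec, dotProduct, hrow i], fun v hv => ?_⟩
  have hconst (i j : Fin n) : v i = v j := by
    refine funext_set (fun _ => Set.Ioi 0) (fun _ => Set.Ioi_infinite 0) fun y hy => ?_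
    have hpos (l : Fin k) : 0 < y l := hy l (Set.mem_univ l)
    refine Matrix.apply_eq_of_mulVec_eq_smul_of_pos (A := P.map (eval y)) (r := eval y Pn)
      (w := eval y ∘ v)
      (fun a b => eval_pos_of_coeff_nonneg (hne a b) (hnonneg a b) hpos)
      (fun a => by simp [← hrow a]) (funext fun a => ?_) i j
    simp [← RingHom.map_mulVec, hv]
  rcases isEmpty_or_nonempty (Fin n) with hempty | ⟨⟨i₀⟩⟩
  · exact ⟨0, funext hempty.elim⟩
  · exact ⟨v i₀, funext fun i => hconst i i₀⟩

theorem stmt_10 (n k : ℕ) (hn : 2 ≤ n)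
    (P : Matrix (Fin n) (Fin n) (MvPolynomial (Fin k) ℝ))
    (Pn : MvPolynomial (Fin k) ℝ)
    (hne : ∀ i j, P i j ≠ 0)
    (hnonneg : ∀ i j m, 0 ≤ MvPolynomial.coeff m (P i j))
    (hrow : ∀ i, ∑ j, P i j = Pn) :
    P.mulVec (fun _ => 1) = Pn • ((fun _ => 1) : Fin n → MvPolynomial (Fin k) ℝ) ∧
      ∀ v : Fin n → MvPolynomial (Fin k) ℝ,
        P.mulVec v = Pn • v → ∃ c, v = fun _ => c :=
  stmt_10_general n k P Pn hne hnonneg hrow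
end

section
/- Let n ≥ 3. The matrix D_n = (des(π τ⁻¹))_{π,τ ∈ S_n} is diagonalizable with spectrum {C(n,2)(n-1)!, 0, −(n-1)!}, where the eigenvalue C(n,2)(n-1)! has multiplicity 1, the eigenvalue −(n-1)! has multiplicity C(n,2), and the eigenvalue 0 has multiplicity n! − C(n,2) − 1. -/
/-- The number of descents of a permutation of `Fin n`. -/
def desCount {n : ℕ} (σ : Equiv.Perm (Fin n)) : ℕ :=
  (Finset.univ.filter
    (fun p : Fin n × Fin n => (p.2 : ℕ) = (p.1 : ℕ) + 1 ∧ σ p.2 < σ p.1)).card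

/-!
Write `des σ = ((n - 1) + e σ) / 2`, where `e σ = ∑ₖ s_k σ` and `s_k σ = ±1` according as `k` is a
descent of `σ` or not. Then `D = ½ E + ((n - 1) / 2) J` with `E = (e (π τ⁻¹))` and `J` the
all-ones matrix, and both are matrices of group convolution on `S_n`. The heart of the proof is
`e * e = -2 (n - 1)! e`: in `∑_ρ s_k(σ ρ⁻¹) s(ρ)`, with `s` the sign of any pair of positions
`(l, l')`, replacing `ρ` by `(k k+1) ρ` flips the first factor and, since `k` and `k + 1` are
adjacent values, keeps the second unless `{ρ l, ρ l'} = {k, k + 1}`; so only those `2 (n - 2)!`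
permutations survive. With `∑ e = 0`, the matrices `P = J / n!` and `Q = -E / (2 (n - 1)!)` are
orthogonal idempotents, `D = C(n,2) (n - 1)! P - (n - 1)! Q`, and `D` acts diagonally on the
ranges of `P`, `1 - P - Q`, `Q`, whose dimensions are the traces `1`, `n! - C(n,2) - 1`, `C(n,2)`.
-/

open Finset Equiv

lemma CompleteOrthogonalIdempotents.of_mul_eq_zero {R : Type*} [Ring R] {p q : R}
    (hp : IsIdempotentElem p) (hq : IsIdempotentElem q) (hpq : p * q = 0) (hqp : q * p = 0) :
    CompleteOrthogonalIdempotents ![p, 1 - p - q, q] := by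
  refine CompleteOrthogonalIdempotents.iff_ortho_complete.mpr ⟨?_, ?_⟩
  · intro i j hij
    fin_cases i <;> fin_cases j <;> simp_all [mul_sub, sub_mul, hp.eq, hq.eq]
  · rw [Fin.sum_univ_three]
    simp only [Matrix.cons_val_zero, Matrix.cons_val_one, Matrix.cons_val]
    abel

namespace CompleteOrthogonalIdempotents

section Algebra

variable {R A ι : Type*} [CommSemiring R] [Semiring A] [Algebra R A] [Fintype ι]
  {e : ι → A} (he : CompleteOrthogonalIdempotents e) (c : ι → R)
include he

lemma mul_sum_smul (j : ι) : e j * ∑ i, c i • e i = c j • e j := by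
  classical
  simp [Finset.mul_sum, he.mul_eq]

lemma sum_smul_mul (j : ι) : (∑ i, c i • e i) * e j = c j • e j := by
  classical
  simp [Finset.sum_mul, he.mul_eq, eq_comm]

end Algebra

open Module End

variable {K V ι : Type*} [Field K] [AddCommGroup V] [Module K V] [Fintype ι]
  {e : ι → Module.End K V} (he : CompleteOrthogonalIdempotents e) {c : ι → K}
include he

lemma sum_apply (v : V) : ∑ i, e i v = v := by
  simpa using congr($he.complete v)

lemma apply_eq_zero_of_mem_eigenspace {μ : K} {v : V}
    (hv : v ∈ (∑ i, c i • e i).eigenspace μ) {j : ι} (hj : c j ≠ μ) : e j v = 0 := by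
  rw [mem_eigenspace_iff] at hv
  have h := congr($(he.mul_sum_smul c j) v)
  rw [mul_apply, hv, map_smul, LinearMap.smul_apply] at h
  exact smul_right_injective V (sub_ne_zero.mpr hj) (by simp [sub_smul, h])

lemma eigenspace_sum_smul (hc : Function.Injective c) (j : ι) :
    (∑ i, c i • e i).eigenspace (c j) = LinearMap.range (e j) := by
  apply le_antisymm
  · intro v hv
    refine ⟨v, ?_⟩
    calc e j v = ∑ i, e i v :=
          (sum_eq_single j (fun i _ hij => he.apply_eq_zero_of_mem_eigenspace hv (hc.ne hij))
            (by simp)).symm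
      _ = v := he.sum_apply v
  · rintro _ ⟨w, rfl⟩
    rw [mem_eigenspace_iff, ← mul_apply, he.sum_smul_mul, LinearMap.smul_apply]

lemma eigenspace_sum_smul_eq_bot {μ : K} (hμ : μ ∉ Set.range c) :
    (∑ i, c i • e i).eigenspace μ = ⊥ := by
  refine (Submodule.eq_bot_iff _).mpr fun v hv => ?_
  rw [← he.sum_apply v]
  exact sum_eq_zero fun j _ => he.apply_eq_zero_of_mem_eigenspace hv fun h => hμ ⟨j, h⟩

lemma iSup_eigenspace_sum_smul (hc : Function.Injective c) :
    ⨆ μ, (∑ i, c i • e i).eigenspace μ = ⊤ := by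
  refine eq_top_iff.mpr fun v _ => ?_
  rw [← he.sum_apply v]
  refine Submodule.sum_mem _ fun j _ => Submodule.mem_iSup_of_mem (c j) ?_
  rw [he.eigenspace_sum_smul hc]
  exact LinearMap.mem_range_self _ _

lemma spectrum_sum_smul [FiniteDimensional K V] (hc : Function.Injective c)
    (hne : ∀ i, e i ≠ 0) : spectrum K (∑ i, c i • e i) = Set.range c := by
  ext μ
  rw [← hasEigenvalue_iff_mem_spectrum, hasEigenvalue_iff]
  constructor
  · intro hμ
    by_contra h
    exact hμ (he.eigenspace_sum_smul_eq_bot h)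
  · rintro ⟨j, rfl⟩
    rw [he.eigenspace_sum_smul hc, Ne, LinearMap.range_eq_bot]
    exact hne j

lemma finrank_eigenspace_sum_smul [FiniteDimensional K V] (hc : Function.Injective c) (j : ι) :
    (finrank K ((∑ i, c i • e i).eigenspace (c j)) : K) = LinearMap.trace K V (e j) := by
  rw [he.eigenspace_sum_smul hc, LinearMap.IsIdempotentElem.isProj_range _ (he.idem j) |>.trace]

end CompleteOrthogonalIdempotents

lemma CompleteOrthogonalIdempotents.toLin' {R ι m : Type*} [CommSemiring R] [Fintype ι]
    [Fintype m] [DecidableEq m] {e : ι → Matrix m m R} (he : CompleteOrthogonalIdempotents e) :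
    CompleteOrthogonalIdempotents fun i => Matrix.toLin' (e i) :=
  he.map Matrix.toLinAlgEquiv'.toRingEquiv.toRingHom

namespace Equiv.Perm

variable {α : Type*} [DecidableEq α]

lemma exists_apply_eq_apply_eq {a b x y : α} (hab : a ≠ b) (hxy : x ≠ y) :
    ∃ g : Perm α, g a = x ∧ g b = y := by
  refine ⟨swap (swap a x b) y * swap a x, ?_, by simp⟩
  rw [Perm.mul_apply, swap_apply_left]
  refine swap_apply_of_ne_of_ne (fun h => hab ?_) hxy
  simpa using (swap_apply_eq_iff.mp h.symm).symm

variable [Fintype α]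

lemma card_apply_eq_apply_eq_of_ne {a b x y x' y' : α} (hxy : x ≠ y) (hxy' : x' ≠ y') :
    #{ρ : Perm α | ρ a = x ∧ ρ b = y} = #{ρ : Perm α | ρ a = x' ∧ ρ b = y'} := by
  obtain ⟨g, hgx, hgy⟩ := exists_apply_eq_apply_eq hxy hxy'
  refine card_nbij' (g * ·) (g⁻¹ * ·) ?_ ?_ (fun _ _ => by simp) (fun _ _ => by simp)
  · intro ρ
    simp +contextual [hgx, hgy]
  · intro ρ
    simp +contextual [← hgx, ← hgy]

lemma card_apply_eq_apply_eq {a b x y : α} (hab : a ≠ b) (hxy : x ≠ y) :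
    #{ρ : Perm α | ρ a = x ∧ ρ b = y} = (Fintype.card α - 2).factorial := by
  set N := #{ρ : Perm α | ρ a = x ∧ ρ b = y}
  have hfibres : (Fintype.card α).factorial = #(univ : Finset α).offDiag * N := by
    rw [← Fintype.card_perm, ← card_univ, card_eq_sum_card_fiberwise (f := fun ρ => (ρ a, ρ b))
      (t := univ.offDiag) (by simp [Set.MapsTo, hab]), ← smul_eq_mul, ← sum_const]
    refine sum_congr rfl fun q hq => ?_
    simp only [Prod.ext_iff]
    exact card_apply_eq_apply_eq_of_ne (mem_offDiag.mp hq).2.2 hxy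
  obtain ⟨m, hm⟩ : ∃ m, Fintype.card α = m + 2 :=
    ⟨Fintype.card α - 2, by have := Fintype.one_lt_card_iff.mpr ⟨a, b, hab⟩; omega⟩
  have hpairs : (m + 2) * (m + 2) - (m + 2) = (m + 2) * (m + 1) := by
    rw [Nat.sub_eq_iff_eq_add (by nlinarith)]
    ring
  rw [offDiag_card, card_univ, hm, hpairs, Nat.factorial_succ, Nat.factorial_succ, ← mul_assoc]
    at hfibres
  rw [hm, Nat.add_sub_cancel]
  exact (Nat.eq_of_mul_eq_mul_left (by positivity) hfibres).symm

lemma card_apply_eq_apply_eq_or_swap {a b x y : α} (hab : a ≠ b) (hxy : x ≠ y) :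
    #{ρ : Perm α | ρ a = x ∧ ρ b = y ∨ ρ a = y ∧ ρ b = x} = 2 * (Fintype.card α - 2).factorial := by
  rw [filter_or, card_union_of_disjoint, card_apply_eq_apply_eq hab hxy,
    card_apply_eq_apply_eq hab hxy.symm, two_mul]
  exact disjoint_filter.mpr fun ρ _ h h' => hxy (h.1.symm.trans h'.1)

end Equiv.Perm

lemma Equiv.sum_mul_eq_sum_filter_of_comp_eq_neg {ι R : Type*} [Fintype ι] [CommRing R]
    [NoZeroDivisors R] [CharZero R] (τ : ι ≃ ι) (p : ι → Prop) [DecidablePred p] (a b : ι → R)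
    (ha : ∀ i, a (τ i) = -a i) (hb : ∀ i, b (τ i) = if p i then -b i else b i) :
    ∑ i, a i * b i = ∑ i ∈ univ.filter p, a i * b i := by
  have hτ := τ.sum_comp fun i => a i * b i
  simp only [ha, hb] at hτ
  have hpair : ∀ i, a i * b i + -a i * (if p i then -b i else b i) =
      2 * if p i then a i * b i else 0 := fun i => by split_ifs <;> ring
  have hdouble := sum_congr rfl fun i (_ : i ∈ univ) => hpair i
  rw [sum_add_distrib, hτ, ← mul_sum, ← two_mul, ← sum_filter] at hdouble
  exact mul_left_cancel₀ two_ne_zero hdouble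

section PairSign

variable {α : Type*} [LinearOrder α]

lemma swap_lt_swap_iff_of_covBy {k k' x y : α} (h : k ⋖ k')
    (hxy : ¬(x = k ∧ y = k' ∨ x = k' ∧ y = k)) : swap k k' x < swap k k' y ↔ x < y := by
  have hlt := h.lt
  have hbelow : ∀ z, z ≠ k → (z < k' ↔ z < k) := fun z hz =>
    ⟨fun hz' => lt_of_le_of_ne (h.le_of_lt hz') hz, fun hz' => hz'.trans hlt⟩
  have habove : ∀ z, z ≠ k' → (k < z ↔ k' < z) := fun z hz =>
    ⟨fun hz' => lt_of_le_of_ne (h.ge_of_gt hz') hz.symm, fun hz' => hlt.trans hz'⟩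
  rw [swap_apply_def, swap_apply_def]
  split_ifs <;> simp_all

def pairSign (a b : α) (σ : Perm α) : ℝ := if σ b < σ a then 1 else -1

lemma pairSign_comm {a b : α} (hab : a ≠ b) (σ : Perm α) :
    pairSign b a σ = -pairSign a b σ := by
  rcases (σ.injective.ne hab).lt_or_gt with h | h <;> simp [pairSign, h, h.not_gt]

lemma pairSign_mul_swap {a b : α} (hab : a ≠ b) (σ : Perm α) :
    pairSign a b (σ * swap a b) = -pairSign a b σ := by
  rw [← pairSign_comm hab]
  simp [pairSign]

lemma pairSign_swap_mul_of_covBy {a b k k' : α} (h : k ⋖ k') {ρ : Perm α}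
    (hρ : ¬(ρ a = k ∧ ρ b = k' ∨ ρ a = k' ∧ ρ b = k)) :
    pairSign a b (swap k k' * ρ) = pairSign a b ρ := by
  have hρ' : ¬(ρ b = k ∧ ρ a = k' ∨ ρ b = k' ∧ ρ a = k) := by tauto
  simp only [pairSign, Perm.mul_apply, swap_lt_swap_iff_of_covBy h hρ']

lemma pairSign_swap_mul_of_mem {a b k k' : α} (hab : a ≠ b) {ρ : Perm α}
    (hρ : ρ a = k ∧ ρ b = k' ∨ ρ a = k' ∧ ρ b = k) :
    pairSign a b (swap k k' * ρ) = -pairSign a b ρ := by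
  have := ρ.injective.ne hab
  rcases hρ with ⟨ha, hb⟩ | ⟨ha, hb⟩ <;> subst ha hb <;>
    rcases this.lt_or_gt with h | h <;> simp [pairSign, h, h.not_gt]

lemma pairSign_mul_pairSign_of_mem {k k' l l' : α} (hk : k < k') (hl : l ≠ l') {σ ρ : Perm α}
    (hρ : ρ l = k ∧ ρ l' = k' ∨ ρ l = k' ∧ ρ l' = k) :
    pairSign k k' (σ * ρ⁻¹) * pairSign l l' ρ = -pairSign l l' σ := by
  rcases hρ with ⟨h, h'⟩ | ⟨h, h'⟩
  · have hσ : pairSign k k' (σ * ρ⁻¹) = pairSign l l' σ := by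
      simp only [pairSign, Perm.mul_apply, ← h, ← h', Perm.coe_inv, symm_apply_apply]
    have hρ : pairSign l l' ρ = -1 := by simp [pairSign, h, h', hk.not_gt]
    rw [hσ, hρ, mul_neg_one]
  · have hσ : pairSign k k' (σ * ρ⁻¹) = pairSign l' l σ := by
      simp only [pairSign, Perm.mul_apply, ← h, ← h', Perm.coe_inv, symm_apply_apply]
    have hρ : pairSign l l' ρ = 1 := by simp [pairSign, h, h', hk]
    rw [hσ, hρ, mul_one, pairSign_comm hl]

variable [Fintype α]

lemma sum_pairSign_eq_zero {a b : α} (hab : a ≠ b) : ∑ σ, pairSign a b σ = 0 := by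
  have h := Equiv.sum_comp (Equiv.mulRight (swap a b)) (pairSign a b)
  simp only [coe_mulRight, pairSign_mul_swap hab, sum_neg_distrib] at h
  linarith

lemma sum_pairSign_mul_pairSign {k k' l l' : α} (hk : k ⋖ k') (hl : l ≠ l') (σ : Perm α) :
    ∑ ρ, pairSign k k' (σ * ρ⁻¹) * pairSign l l' ρ =
      -(2 * (Fintype.card α - 2).factorial : ℝ) * pairSign l l' σ := by
  have hflip (ρ : Perm α) : pairSign k k' (σ * (swap k k' * ρ)⁻¹) = -pairSign k k' (σ * ρ⁻¹) := by
    rw [mul_inv_rev, swap_inv, ← mul_assoc, pairSign_mul_swap hk.ne]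
  have hkeep (ρ : Perm α) : pairSign l l' (swap k k' * ρ) =
      if ρ l = k ∧ ρ l' = k' ∨ ρ l = k' ∧ ρ l' = k then -pairSign l l' ρ
      else pairSign l l' ρ := by
    split_ifs with hρ
    · exact pairSign_swap_mul_of_mem hl hρ
    · exact pairSign_swap_mul_of_covBy hk hρ
  calc ∑ ρ, pairSign k k' (σ * ρ⁻¹) * pairSign l l' ρ
      = ∑ ρ ∈ {ρ : Perm α | ρ l = k ∧ ρ l' = k' ∨ ρ l = k' ∧ ρ l' = k},
          pairSign k k' (σ * ρ⁻¹) * pairSign l l' ρ :=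
        (Equiv.mulLeft (swap k k')).sum_mul_eq_sum_filter_of_comp_eq_neg _ _ _ hflip hkeep
    _ = ∑ ρ ∈ {ρ : Perm α | ρ l = k ∧ ρ l' = k' ∨ ρ l = k' ∧ ρ l' = k}, -pairSign l l' σ :=
        sum_congr rfl fun ρ hρ => pairSign_mul_pairSign_of_mem hk.lt hl (mem_filter.mp hρ).2
    _ = _ := by
        rw [sum_const, Perm.card_apply_eq_apply_eq_or_swap hl hk.ne, nsmul_eq_mul]
        push_cast
        ring

def pairSignSum (A : Finset (α × α)) (σ : Perm α) : ℝ := ∑ p ∈ A, pairSign p.1 p.2 σ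

lemma sum_pairSignSum {A : Finset (α × α)} (hA : ∀ p ∈ A, p.1 ≠ p.2) :
    ∑ σ, pairSignSum A σ = 0 := by
  simp only [pairSignSum]
  rw [sum_comm]
  exact sum_eq_zero fun p hp => sum_pairSign_eq_zero (hA p hp)

end PairSign

section Convolution

variable {G R : Type*} [Group G]

def convolutionMatrix (φ : G → R) : Matrix G G R := Matrix.of fun π τ => φ (π * τ⁻¹)

variable [CommSemiring R]

lemma convolutionMatrix_smul (c : R) (φ : G → R) :
    convolutionMatrix (c • φ) = c • convolutionMatrix φ := rfl

lemma convolutionMatrix_const (c : R) :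
    convolutionMatrix (fun _ : G => c) = c • convolutionMatrix 1 := by
  ext
  simp [convolutionMatrix]

variable [Fintype G]

def groupConvolution (φ ψ : G → R) (σ : G) : R := ∑ ρ, φ (σ * ρ⁻¹) * ψ ρ

lemma convolutionMatrix_mul (φ ψ : G → R) :
    convolutionMatrix φ * convolutionMatrix ψ = convolutionMatrix (groupConvolution φ ψ) := by
  ext π τ
  rw [Matrix.mul_apply, ← Equiv.sum_comp (Equiv.mulRight τ)]
  simp [convolutionMatrix, groupConvolution, mul_assoc]

lemma groupConvolution_one_right (φ : G → R) : groupConvolution φ 1 = fun _ => ∑ σ, φ σ := by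
  ext σ
  simpa [groupConvolution] using
    Fintype.sum_equiv ((Equiv.inv G).trans (Equiv.mulLeft σ)) _ φ fun _ => rfl

lemma groupConvolution_one_left (ψ : G → R) : groupConvolution 1 ψ = fun _ => ∑ σ, ψ σ := by
  ext σ
  simp [groupConvolution]

lemma trace_convolutionMatrix (φ : G → R) :
    (convolutionMatrix φ).trace = Fintype.card G • φ 1 := by
  simp [Matrix.trace, convolutionMatrix]

lemma groupConvolution_pairSignSum {α : Type*} [LinearOrder α] [Fintype α]
    {A : Finset (α × α)} (hA : ∀ p ∈ A, p.1 ⋖ p.2) :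
    groupConvolution (pairSignSum A) (pairSignSum A) =
      (-(2 * (Fintype.card α - 2).factorial * #A : ℝ)) • pairSignSum A := by
  ext σ
  calc ∑ ρ, pairSignSum A (σ * ρ⁻¹) * pairSignSum A ρ
      = ∑ p ∈ A, ∑ q ∈ A, ∑ ρ, pairSign p.1 p.2 (σ * ρ⁻¹) * pairSign q.1 q.2 ρ := by
        simp only [pairSignSum, sum_mul_sum]
        rw [sum_comm]
        exact sum_congr rfl fun _ _ => sum_comm
    _ = ∑ p ∈ A, ∑ q ∈ A, -(2 * (Fintype.card α - 2).factorial : ℝ) * pairSign q.1 q.2 σ :=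
        sum_congr rfl fun p hp => sum_congr rfl fun q hq =>
          sum_pairSign_mul_pairSign (hA p hp) (hA q hq).ne σ
    _ = _ := by
        simp only [sum_const, ← mul_sum, nsmul_eq_mul, Pi.smul_apply, smul_eq_mul, pairSignSum]
        ring

end Convolution

section Averaging

variable (G : Type*) [Group G] [Fintype G]

noncomputable def averagingMatrix : Matrix G G ℝ :=
  (Fintype.card G : ℝ)⁻¹ • convolutionMatrix 1

lemma isIdempotentElem_averagingMatrix : IsIdempotentElem (averagingMatrix G) := by
  have hG : (Fintype.card G : ℝ) ≠ 0 := Nat.cast_ne_zero.mpr Fintype.card_ne_zero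
  simp only [IsIdempotentElem, averagingMatrix, smul_mul_smul, convolutionMatrix_mul,
    groupConvolution_one_left, Pi.one_apply, sum_const, card_univ, nsmul_one,
    convolutionMatrix_const, smul_smul]
  field_simp

lemma trace_averagingMatrix : (averagingMatrix G).trace = 1 := by
  have hG : (Fintype.card G : ℝ) ≠ 0 := Nat.cast_ne_zero.mpr Fintype.card_ne_zero
  simp [averagingMatrix, trace_convolutionMatrix, hG]

variable {G}

lemma averagingMatrix_mul_convolutionMatrix {φ : G → ℝ} (hφ : ∑ σ, φ σ = 0) :
    averagingMatrix G * convolutionMatrix φ = 0 := by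
  rw [averagingMatrix, smul_mul_assoc, convolutionMatrix_mul, groupConvolution_one_left, hφ,
    convolutionMatrix_const, zero_smul, smul_zero]

lemma convolutionMatrix_mul_averagingMatrix {φ : G → ℝ} (hφ : ∑ σ, φ σ = 0) :
    convolutionMatrix φ * averagingMatrix G = 0 := by
  rw [averagingMatrix, mul_smul_comm, convolutionMatrix_mul, groupConvolution_one_right, hφ,
    convolutionMatrix_const, zero_smul, smul_zero]

end Averaging

lemma Nat.choose_two_add_one_lt_factorial {n : ℕ} (hn : 3 ≤ n) :
    n.choose 2 + 1 < n.factorial := by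
  have h6 : 6 ≤ n * (n - 1) := Nat.mul_le_mul hn (by omega : 2 ≤ n - 1)
  have hle : n * (n - 1) ≤ n.factorial := by
    rw [← Nat.mul_factorial_pred (by omega : n ≠ 0)]
    exact Nat.mul_le_mul_left n (Nat.self_le_factorial _)
  rw [Nat.choose_two_right]
  omega

section Descents

variable {n : ℕ}

def adjacentPairs (n : ℕ) : Finset (Fin n × Fin n) := {p | (p.2 : ℕ) = p.1 + 1}

lemma covBy_of_mem_adjacentPairs {p : Fin n × Fin n} (hp : p ∈ adjacentPairs n) :
    p.1 ⋖ p.2 := by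
  rw [adjacentPairs, mem_filter] at hp
  rw [Fin.covBy_iff, Nat.covBy_iff_add_one_eq, hp.2]

lemma card_adjacentPairs : #(adjacentPairs n) = n - 1 := by
  rw [← card_range (n - 1)]
  refine card_bij (fun p _ => p.1) (fun p hp => ?_) (fun p hp q hq h => ?_) fun i hi => ?_
  · simp only [adjacentPairs, mem_filter] at hp
    simp only [mem_range]
    omega
  · simp only [adjacentPairs, mem_filter] at hp hq
    exact Prod.ext (Fin.ext h) (Fin.ext (by omega))
  · simp only [mem_range] at hi
    exact ⟨(⟨i, by omega⟩, ⟨i + 1, by omega⟩), by simp [adjacentPairs], rfl⟩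

lemma desCount_eq_card_filter_adjacentPairs (σ : Perm (Fin n)) :
    desCount σ = #{p ∈ adjacentPairs n | σ p.2 < σ p.1} := by
  rw [desCount, adjacentPairs, filter_filter]

lemma desCount_one : desCount (1 : Perm (Fin n)) = 0 := by
  rw [desCount, card_eq_zero, filter_eq_empty_iff]
  rintro p - ⟨h, hlt⟩
  rw [Perm.one_apply, Perm.one_apply, Fin.lt_def] at hlt
  omega

lemma pairSignSum_adjacentPairs (σ : Perm (Fin n)) :
    pairSignSum (adjacentPairs n) σ = 2 * desCount σ - (n - 1 : ℕ) := by
  have h (p) (_ : p ∈ adjacentPairs n) :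
      pairSign p.1 p.2 σ = 2 * (if σ p.2 < σ p.1 then 1 else 0) - 1 := by
    unfold pairSign
    split_ifs <;> norm_num
  rw [pairSignSum, sum_congr rfl h, sum_sub_distrib, ← mul_sum, sum_boole, sum_const,
    card_adjacentPairs, desCount_eq_card_filter_adjacentPairs, nsmul_one]

lemma sum_pairSignSum_adjacentPairs : ∑ σ, pairSignSum (adjacentPairs n) σ = 0 :=
  sum_pairSignSum fun _ hp => (covBy_of_mem_adjacentPairs hp).ne

noncomputable def descentProjection (n : ℕ) : Matrix (Perm (Fin n)) (Perm (Fin n)) ℝ :=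
  -(2 * ((n - 1).factorial : ℝ))⁻¹ • convolutionMatrix (pairSignSum (adjacentPairs n))

lemma isIdempotentElem_descentProjection (hn : 2 ≤ n) :
    IsIdempotentElem (descentProjection n) := by
  have hconv := groupConvolution_pairSignSum fun _ hp => covBy_of_mem_adjacentPairs (n := n) hp
  have hfact : ((n - 2).factorial * (n - 1 : ℕ) : ℝ) = (n - 1).factorial := by
    rw [← Nat.cast_mul, mul_comm, show n - 2 = n - 1 - 1 by omega,
      Nat.mul_factorial_pred (by omega)]
  have hpos : ((n - 1).factorial : ℝ) ≠ 0 := by positivity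
  rw [Fintype.card_fin, card_adjacentPairs, mul_assoc, hfact] at hconv
  rw [IsIdempotentElem, descentProjection, smul_mul_smul, convolutionMatrix_mul, hconv,
    convolutionMatrix_smul, smul_smul]
  congr 1
  field_simp

lemma trace_descentProjection (hn : n ≠ 0) : (descentProjection n).trace = n.choose 2 := by
  rw [descentProjection, Matrix.trace_smul, trace_convolutionMatrix, pairSignSum_adjacentPairs,
    desCount_one, Fintype.card_perm, Fintype.card_fin, ← Nat.mul_factorial_pred hn,
    Nat.cast_choose_two, Nat.cast_sub (Nat.one_le_iff_ne_zero.mpr hn)]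
  have hpos : ((n - 1).factorial : ℝ) ≠ 0 := by positivity
  simp only [nsmul_eq_mul, smul_eq_mul]
  push_cast
  field_simp
  ring

noncomputable def descentIdempotents (n : ℕ) : Fin 3 → Matrix (Perm (Fin n)) (Perm (Fin n)) ℝ :=
  ![averagingMatrix _, 1 - averagingMatrix _ - descentProjection n, descentProjection n]

def descentEigenvalues (n : ℕ) : Fin 3 → ℝ :=
  ![((n.choose 2 * (n - 1).factorial : ℕ) : ℝ), 0, -(((n - 1).factorial : ℕ) : ℝ)]

def descentMultiplicities (n : ℕ) : Fin 3 → ℕ :=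
  ![1, n.factorial - n.choose 2 - 1, n.choose 2]

lemma completeOrthogonalIdempotents_descentIdempotents (hn : 2 ≤ n) :
    CompleteOrthogonalIdempotents (descentIdempotents n) := by
  refine .of_mul_eq_zero (isIdempotentElem_averagingMatrix _)
    (isIdempotentElem_descentProjection hn) ?_ ?_
  · rw [descentProjection, mul_smul_comm,
      averagingMatrix_mul_convolutionMatrix sum_pairSignSum_adjacentPairs, smul_zero]
  · rw [descentProjection, smul_mul_assoc,
      convolutionMatrix_mul_averagingMatrix sum_pairSignSum_adjacentPairs, smul_zero]

lemma convolutionMatrix_desCount_eq_sum (hn : n ≠ 0) :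
    convolutionMatrix (fun σ : Perm (Fin n) => (desCount σ : ℝ)) =
      ∑ i, descentEigenvalues n i • descentIdempotents n i := by
  ext π τ
  simp only [Fin.sum_univ_three, descentEigenvalues, descentIdempotents, Matrix.cons_val_zero,
    Matrix.cons_val_one, Matrix.cons_val, zero_smul, add_zero, Matrix.add_apply, Matrix.smul_apply,
    averagingMatrix, descentProjection, convolutionMatrix, Matrix.of_apply, Pi.one_apply,
    pairSignSum_adjacentPairs, smul_eq_mul, mul_one, Nat.cast_mul]
  rw [Fintype.card_perm, Fintype.card_fin, ← Nat.mul_factorial_pred hn, Nat.cast_choose_two,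
    Nat.cast_sub (Nat.one_le_iff_ne_zero.mpr hn)]
  have hpos : ((n - 1).factorial : ℝ) ≠ 0 := by positivity
  have hn' : (n : ℝ) ≠ 0 := by exact_mod_cast hn
  push_cast
  field_simp
  ring

lemma trace_descentIdempotents (hn : 3 ≤ n) (i : Fin 3) :
    (descentIdempotents n i).trace = descentMultiplicities n i := by
  have hlt := Nat.choose_two_add_one_lt_factorial hn
  fin_cases i
  · simp [descentIdempotents, descentMultiplicities, trace_averagingMatrix]
  · simp only [descentIdempotents, descentMultiplicities, Fin.mk_one, Matrix.cons_val_one,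
      Matrix.cons_val_zero, Matrix.trace_sub, Matrix.trace_one, trace_averagingMatrix,
      trace_descentProjection (by omega : n ≠ 0)]
    rw [Fintype.card_perm, Fintype.card_fin, Nat.sub_sub, Nat.cast_sub hlt.le]
    push_cast
    ring
  · simp [descentIdempotents, descentMultiplicities, trace_descentProjection (by omega : n ≠ 0)]

lemma descentEigenvalues_injective (hn : 2 ≤ n) : Function.Injective (descentEigenvalues n) := by
  have hC : n.choose 2 ≠ 0 := (Nat.choose_pos hn).ne'
  have hc₁ : (0 : ℝ) < n.choose 2 := by positivity
  have hc₂ : (0 : ℝ) < (n - 1).factorial := by positivity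
  intro i j hij
  fin_cases i <;> fin_cases j <;>
    simp [descentEigenvalues, hC, Nat.factorial_ne_zero] at hij ⊢ <;> nlinarith

lemma range_descentEigenvalues :
    Set.range (descentEigenvalues n) =
      {((n.choose 2 * (n - 1).factorial : ℕ) : ℝ), 0, -(((n - 1).factorial : ℕ) : ℝ)} := by
  simp only [descentEigenvalues, Matrix.range_cons, Matrix.range_empty, Set.union_empty,
    Set.singleton_union]

lemma descentMultiplicities_ne_zero (hn : 3 ≤ n) (i : Fin 3) : descentMultiplicities n i ≠ 0 := by
  have hlt := Nat.choose_two_add_one_lt_factorial hn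
  have hC := Nat.choose_pos (by omega : 2 ≤ n)
  fin_cases i <;> simp [descentMultiplicities] <;> omega

lemma descentIdempotents_ne_zero (hn : 3 ≤ n) (i : Fin 3) : descentIdempotents n i ≠ 0 := by
  intro h
  have htrace := trace_descentIdempotents hn i
  rw [h, Matrix.trace_zero] at htrace
  exact descentMultiplicities_ne_zero hn i (by exact_mod_cast htrace.symm)

end Descents

theorem stmt_12 (n : ℕ) (hn : 3 ≤ n)
    (D : Matrix (Equiv.Perm (Fin n)) (Equiv.Perm (Fin n)) ℝ)
    (hD : ∀ π τ, D π τ = desCount (π * τ⁻¹))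
    (f : Module.End ℝ (Equiv.Perm (Fin n) → ℝ)) (hf : f = D.mulVecLin) :
    (⨆ μ : ℝ, f.eigenspace μ) = ⊤ ∧
    spectrum ℝ f =
      {((n.choose 2 * (n - 1).factorial : ℕ) : ℝ), 0, -(((n - 1).factorial : ℕ) : ℝ)} ∧
    Module.finrank ℝ (f.eigenspace ((n.choose 2 * (n - 1).factorial : ℕ) : ℝ)) = 1 ∧
    Module.finrank ℝ (f.eigenspace (-(((n - 1).factorial : ℕ) : ℝ))) = n.choose 2 ∧
    Module.finrank ℝ (f.eigenspace 0) = n.factorial - n.choose 2 - 1 := by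
  have he := (completeOrthogonalIdempotents_descentIdempotents (n := n) (by omega)).toLin'
  have hc := descentEigenvalues_injective (n := n) (by omega)
  have hf' : f = ∑ i, descentEigenvalues n i • Matrix.toLin' (descentIdempotents n i) := by
    have hD' : D = convolutionMatrix fun σ => (desCount σ : ℝ) := Matrix.ext hD
    rw [hf, ← Matrix.toLin'_apply', hD', convolutionMatrix_desCount_eq_sum (by omega), map_sum]
    simp only [map_smul]
  have hfinrank (i : Fin 3) :
      Module.finrank ℝ (f.eigenspace (descentEigenvalues n i)) = descentMultiplicities n i := by
    have h := (he.finrank_eigenspace_sum_smul hc i).trans (Matrix.trace_toLin'_eq _)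
    rw [← hf', trace_descentIdempotents hn] at h
    exact_mod_cast h
  have hne (i : Fin 3) : Matrix.toLin' (descentIdempotents n i) ≠ 0 :=
    Matrix.toLin'.map_ne_zero_iff.mpr (descentIdempotents_ne_zero hn i)
  refine ⟨hf' ▸ he.iSup_eigenspace_sum_smul hc, ?_, hfinrank 0, hfinrank 2, hfinrank 1⟩
  rw [hf', he.spectrum_sum_smul hc hne, range_descentEigenvalues]
end

section
/- Let n ≥ 3 and let τ ∈ S_n. Then Σ_{σ ∈ S_n} des(τσ)·des(σ⁻¹) = Σ_{σ ∈ S_n} des(σ)·des(σ⁻¹) − des(τ)·(n-1)!. -/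
open Finset Equiv Nat

section DecidableEq

variable {α : Type*} [DecidableEq α]

theorem exists_perm_apply_eq_and_apply_eq {x y u v : α} (hxy : x ≠ y) (huv : u ≠ v) :
    ∃ π : Perm α, π x = u ∧ π y = v := by
  refine ⟨swap (swap x u y) v * swap x u, ?_, by simp⟩
  have : u ≠ swap x u y := fun h =>
    hxy ((swap x u).injective (h.symm.trans (swap_apply_left x u).symm)).symm
  simp [swap_apply_of_ne_of_ne this huv]

variable [Fintype α]

theorem card_perm_apply_eq_self_and_apply_eq_self {x y : α} (hxy : x ≠ y) :
    #{ρ : Perm α | ρ x = x ∧ ρ y = y} = (Fintype.card α - 2)! := by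
  have hfix : #{ρ : Perm α | ρ x = x ∧ ρ y = y} =
      Fintype.card {ρ : Perm α // ∀ a, ¬(a ≠ x ∧ a ≠ y) → ρ a = a} := by
    rw [Fintype.card_subtype]
    congr 1
    ext ρ
    simp only [mem_filter, mem_univ, true_and, not_and_or, not_not]
    exact ⟨fun ⟨hx, hy⟩ a ha => ha.elim (· ▸ hx) (· ▸ hy),
      fun h => ⟨h x (.inl rfl), h y (.inr rfl)⟩⟩
  rw [hfix, ← Fintype.card_congr (Perm.subtypeEquivSubtypePerm _), Fintype.card_perm,
    Fintype.card_subtype, ← card_pair hxy, ← card_compl]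
  congr 2
  ext
  simp

theorem card_perm_apply_eq_and_apply_eq {x y u v : α} (hxy : x ≠ y) (huv : u ≠ v) :
    #{ρ : Perm α | ρ x = u ∧ ρ y = v} = (Fintype.card α - 2)! := by
  obtain ⟨π, rfl, rfl⟩ := exists_perm_apply_eq_and_apply_eq hxy huv
  rw [← card_perm_apply_eq_self_and_apply_eq_self hxy]
  refine card_nbij' (π⁻¹ * ·) (π * ·) ?_ ?_ (fun _ _ => by simp) (fun _ _ => by simp) <;>
    simp +contextual [Set.MapsTo]

end DecidableEq

section LinearOrder

variable {α : Type*} [LinearOrder α] {a b : α}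

theorem swap_lt_swap_of_covBy (hab : a ⋖ b) {x y : α} (hxy : x < y) (h : ¬(x = a ∧ y = b)) :
    swap a b x < swap a b y := by
  rcases eq_or_ne x a with rfl | hxa
  · have hyb : y ≠ b := fun hyb => h ⟨rfl, hyb⟩
    rw [swap_apply_left, swap_apply_of_ne_of_ne hxy.ne' hyb]
    exact (hab.ge_of_gt hxy).lt_of_ne hyb.symm
  rcases eq_or_ne x b with rfl | hxb
  · rw [swap_apply_right, swap_apply_of_ne_of_ne (hab.lt.trans hxy).ne' hxy.ne']
    exact hab.lt.trans hxy
  rw [swap_apply_of_ne_of_ne hxa hxb]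
  rcases eq_or_ne y a with rfl | hya
  · simpa using hxy.trans hab.lt
  rcases eq_or_ne y b with rfl | hyb
  · simpa using (hab.le_of_lt hxy).lt_of_ne hxa
  rwa [swap_apply_of_ne_of_ne hya hyb]

variable [Fintype α] {u v : α}

/-- `ρ ↦ ρ * swap a b` exchanges the two sides: as the positions `a`, `b` are adjacent, it keeps
the relative order of the positions of `v` and `u` unless these are exactly `a` and `b`. -/
theorem card_rel_apply_of_covBy (hab : a ⋖ b) (r : α → α → Prop) [DecidableRel r]
    (huv : r u v) (hvu : ¬r v u) :
    #{ρ : Perm α | r (ρ b) (ρ a) ∧ ρ⁻¹ v < ρ⁻¹ u} =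
      #{ρ : Perm α | r (ρ a) (ρ b) ∧ ρ⁻¹ v < ρ⁻¹ u} + #{ρ : Perm α | ρ a = v ∧ ρ b = u} := by
  have hinv (ρ : Perm α) (z : α) : (ρ * swap a b)⁻¹ z = swap a b (ρ⁻¹ z) := by
    simp [mul_inv_rev, swap_inv]
  have hexc (ρ : Perm α) : ρ a = v ∧ ρ b = u ↔ ρ⁻¹ v = a ∧ ρ⁻¹ u = b := by
    rw [Perm.inv_eq_iff_eq, Perm.inv_eq_iff_eq, eq_comm, @eq_comm _ u]
  rw [← card_filter_add_card_filter_not (fun ρ : Perm α => ρ a = v ∧ ρ b = u),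
    filter_filter, filter_filter, add_comm]
  congr 1
  · refine card_nbij' (· * swap a b) (· * swap a b) ?_ ?_ (fun _ _ => by simp)
      (fun _ _ => by simp)
    · intro ρ hρ
      simp only [coe_filter, mem_univ, true_and, Set.mem_ofPred_eq, Perm.mul_apply,
        swap_apply_left, swap_apply_right, hinv, hexc] at hρ ⊢
      exact ⟨hρ.1.1, swap_lt_swap_of_covBy hab hρ.1.2 hρ.2⟩
    · intro ρ hρ
      simp only [coe_filter, mem_univ, true_and, Set.mem_ofPred_eq, Perm.mul_apply,
        swap_apply_left, swap_apply_right, hinv, hexc, swap_apply_eq_iff] at hρ ⊢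
      obtain ⟨hr, hvu'⟩ := hρ
      refine ⟨⟨hr, swap_lt_swap_of_covBy hab hvu' fun h => hvu ?_⟩, fun h => ?_⟩
      · rw [← hexc] at h
        rwa [h.1, h.2] at hr
      · rw [h.1, h.2] at hvu'
        exact hab.lt.not_gt hvu'
  · congr 1
    ext ρ
    simp only [mem_filter, mem_univ, true_and, and_iff_right_iff_imp, and_imp]
    rintro rfl rfl
    simpa using ⟨huv, hab.lt⟩

theorem card_inv_lt_inv_comm (u v : α) :
    #{ρ : Perm α | ρ⁻¹ v < ρ⁻¹ u} = #{ρ : Perm α | ρ⁻¹ u < ρ⁻¹ v} := by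
  refine card_nbij' (swap u v * ·) (swap u v * ·) ?_ ?_ (fun _ _ => by simp)
    (fun _ _ => by simp) <;>
  · intro ρ hρ
    simp only [coe_filter, mem_univ, true_and, Set.mem_ofPred_eq, mul_inv_rev, swap_inv,
      Perm.mul_apply, swap_apply_left, swap_apply_right] at hρ ⊢
    exact hρ

theorem card_descent_inv_lt_eq_add (hab : a ⋖ b) (huv : u < v) :
    #{ρ : Perm α | ρ b < ρ a ∧ ρ⁻¹ v < ρ⁻¹ u} =
      #{ρ : Perm α | ρ b < ρ a ∧ ρ⁻¹ u < ρ⁻¹ v} + (Fintype.card α - 2)! := by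
  have hsplit (x y : α) : #{ρ : Perm α | ρ b < ρ a ∧ ρ⁻¹ y < ρ⁻¹ x} +
      #{ρ : Perm α | ρ a < ρ b ∧ ρ⁻¹ y < ρ⁻¹ x} = #{ρ : Perm α | ρ⁻¹ y < ρ⁻¹ x} := by
    rw [← card_filter_add_card_filter_not (fun ρ : Perm α => ρ b < ρ a)
      (s := {ρ : Perm α | ρ⁻¹ y < ρ⁻¹ x}), filter_filter, filter_filter]
    congr 2 <;> ext ρ
    · simp only [mem_filter, mem_univ, true_and, and_comm]
    · simp only [mem_filter, mem_univ, true_and, not_lt, (ρ.injective.ne hab.lt.ne).le_iff_lt,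
        and_comm]
  have hdes := card_rel_apply_of_covBy hab (· < ·) huv huv.not_gt
  have hasc := card_rel_apply_of_covBy hab (fun x y => y < x) huv huv.not_gt
  rw [card_perm_apply_eq_and_apply_eq hab.lt.ne huv.ne'] at hdes
  rw [card_perm_apply_eq_and_apply_eq hab.lt.ne huv.ne] at hasc
  have hcomm := card_inv_lt_inv_comm u v
  have hsplit₁ := hsplit u v
  have hsplit₂ := hsplit v u
  omega

end LinearOrder

section Descents

variable {n : ℕ}

def adjPairs (n : ℕ) : Finset (Fin n × Fin n) := {p | (p.2 : ℕ) = p.1 + 1}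

theorem covBy_of_mem_adjPairs {p : Fin n × Fin n} (hp : p ∈ adjPairs n) : p.1 ⋖ p.2 := by
  simp_all [adjPairs, Fin.covBy_iff]

theorem card_adjPairs (n : ℕ) : #(adjPairs n) = n - 1 := by
  rw [← card_range (n - 1)]
  refine card_bij (fun p _ => p.1) (fun p hp => ?_) (fun p hp q hq h => ?_) (fun i hi => ?_)
  · simp only [adjPairs, mem_filter, mem_univ, true_and, mem_range] at hp ⊢
    omega
  · simp only [adjPairs, mem_filter, mem_univ, true_and] at hp hq
    ext <;> omega
  · exact ⟨(⟨i, by grind⟩, ⟨i + 1, by grind⟩), by simp [adjPairs], rfl⟩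

theorem desCount_eq_sum (σ : Perm (Fin n)) :
    desCount σ = ∑ p ∈ adjPairs n, if σ p.2 < σ p.1 then 1 else 0 := by
  rw [desCount, ← card_filter, adjPairs, filter_filter]

/-- `ρ⁻¹ x < ρ⁻¹ y` says that the value `x` comes before `y` in the one-line notation of `ρ`. -/
def desSumPrec (x y : Fin n) : ℕ := ∑ ρ : Perm (Fin n) with ρ⁻¹ x < ρ⁻¹ y, desCount ρ

theorem desSumPrec_eq_sum_card (x y : Fin n) :
    desSumPrec x y = ∑ p ∈ adjPairs n, #{ρ : Perm (Fin n) | ρ p.2 < ρ p.1 ∧ ρ⁻¹ x < ρ⁻¹ y} := by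
  simp_rw [desSumPrec, desCount_eq_sum, sum_comm (s := filter _ _), card_filter, sum_filter,
    ← ite_and, and_comm]

theorem desSumPrec_eq_add_factorial {x y : Fin n} (hxy : x < y) :
    desSumPrec y x = desSumPrec x y + (n - 1)! := by
  rw [desSumPrec_eq_sum_card, desSumPrec_eq_sum_card]
  calc _ = ∑ p ∈ adjPairs n, (#{ρ : Perm (Fin n) | ρ p.2 < ρ p.1 ∧ ρ⁻¹ x < ρ⁻¹ y} + (n - 2)!) :=
        sum_congr rfl fun p hp => by
          simpa using card_descent_inv_lt_eq_add (covBy_of_mem_adjPairs hp) hxy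
    _ = _ := by
      have hn : 2 ≤ n := by omega
      rw [sum_add_distrib, sum_const, card_adjPairs, smul_eq_mul, show n - 2 = n - 1 - 1 by omega,
        mul_factorial_pred (by omega)]

theorem desSumPrec_add_desSumPrec {x y : Fin n} (hxy : x ≠ y) :
    desSumPrec x y + desSumPrec y x = ∑ ρ : Perm (Fin n), desCount ρ := by
  rw [desSumPrec, desSumPrec,
    ← sum_filter_add_sum_filter_not univ (fun ρ : Perm (Fin n) => ρ⁻¹ x < ρ⁻¹ y)]
  congr 2
  ext ρ
  simp only [mem_filter, mem_univ, true_and, not_lt]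
  exact (ρ⁻¹.injective.ne hxy.symm).le_iff_lt.symm

theorem desSumPrec_add_ite {x y u v : Fin n} (hxy : x < y) (huv : u ≠ v) :
    desSumPrec u v + (if u < v then (n - 1)! else 0) = desSumPrec y x := by
  have hxy₁ := desSumPrec_eq_add_factorial hxy
  have hxy₂ := desSumPrec_add_desSumPrec hxy.ne
  have huv₂ := desSumPrec_add_desSumPrec huv
  rcases huv.lt_or_gt with h | h
  · have huv₁ := desSumPrec_eq_add_factorial h
    rw [if_pos h]
    omega
  · have hvu₁ := desSumPrec_eq_add_factorial h
    rw [if_neg h.not_gt]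
    omega

theorem sum_desCount_mul_desCount_inv (τ : Perm (Fin n)) :
    ∑ σ, desCount (τ * σ) * desCount σ⁻¹ = ∑ q ∈ adjPairs n, desSumPrec (τ q.2) (τ q.1) :=
  calc ∑ σ, desCount (τ * σ) * desCount σ⁻¹
      = ∑ σ, ∑ q ∈ adjPairs n, if σ⁻¹ q.2 < σ⁻¹ q.1 then desCount (τ * σ) else 0 :=
        sum_congr rfl fun σ _ => by
          rw [desCount_eq_sum σ⁻¹, mul_sum]
          simp only [mul_ite, mul_one, mul_zero]
    _ = ∑ q ∈ adjPairs n, ∑ σ, if σ⁻¹ q.2 < σ⁻¹ q.1 then desCount (τ * σ) else 0 := by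
        rw [sum_comm]
    _ = _ := sum_congr rfl fun q _ => by
        rw [desSumPrec, sum_filter]
        exact Fintype.sum_equiv (Equiv.mulLeft τ) _ _ fun σ => by simp

theorem sum_desCount_mul_desCount_inv_add (τ : Perm (Fin n)) :
    ∑ σ, desCount (τ * σ) * desCount σ⁻¹ + desCount τ * (n - 1)! =
      ∑ σ : Perm (Fin n), desCount σ * desCount σ⁻¹ := by
  have h₁ := sum_desCount_mul_desCount_inv (1 : Perm (Fin n))
  simp only [one_mul, Perm.one_apply] at h₁
  rw [sum_desCount_mul_desCount_inv, h₁, desCount_eq_sum τ, sum_mul, ← sum_add_distrib]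
  refine sum_congr rfl fun q hq => ?_
  have hq := (covBy_of_mem_adjPairs hq).lt
  rw [ite_mul, one_mul, zero_mul]
  exact desSumPrec_add_ite hq (τ.injective.ne hq.ne')

end Descents

theorem stmt_17_general (n : ℕ) (τ : Equiv.Perm (Fin n)) :
    ∑ σ : Equiv.Perm (Fin n), (desCount (τ * σ) : ℤ) * (desCount σ⁻¹ : ℤ) =
      (∑ σ : Equiv.Perm (Fin n), (desCount σ : ℤ) * (desCount σ⁻¹ : ℤ)) -
        (desCount τ : ℤ) * ((n - 1).factorial : ℤ) := by
  rw [eq_sub_iff_add_eq]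
  exact_mod_cast sum_desCount_mul_desCount_inv_add τ

theorem stmt_17 (n : ℕ) (hn : 3 ≤ n) (τ : Equiv.Perm (Fin n)) :
    ∑ σ : Equiv.Perm (Fin n), (desCount (τ * σ) : ℤ) * (desCount σ⁻¹ : ℤ) =
      (∑ σ : Equiv.Perm (Fin n), (desCount σ : ℤ) * (desCount σ⁻¹ : ℤ)) -
        (desCount τ : ℤ) * ((n - 1).factorial : ℤ) :=
  stmt_17_general n τ
end

section
/- Let n ≥ 3, let i be in {1,…,n-1}, and consider the sets A = {σ ∈ S_n : σ⁻¹(i+1) = σ⁻¹(i) + 1} and B = {σ ∈ S_n : σ⁻¹(i) = σ⁻¹(i+1) + 1}. Then Σ_{σ ∈ A} des(σ⁻¹) = Σ_{σ ∈ B} des(σ⁻¹) − (n-2)!·(n-1). -/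
open Finset Equiv Nat

namespace Equiv.Perm

variable {α : Type*} [Fintype α] [DecidableEq α]

lemma card_apply_eq_self_and_apply_eq_self {a c : α} (hac : a ≠ c) :
    #{σ : Perm α | σ a = a ∧ σ c = c} = (Fintype.card α - 2)! := by
  let p : α → Prop := fun x => x ∉ ({a, c} : Finset α)
  calc #{σ : Perm α | σ a = a ∧ σ c = c}
      = Fintype.card {σ : Perm α // ∀ x, ¬p x → σ x = x} := by
        rw [Fintype.card_subtype]
        congr 1; ext σ
        simp only [p, mem_filter, mem_univ, true_and, mem_insert, mem_singleton, not_not,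
          or_imp, forall_and, forall_eq]
    _ = Fintype.card (Perm {x // p x}) :=
        (Fintype.card_congr (Perm.subtypeEquivSubtypePerm p)).symm
    _ = (Fintype.card α - 2)! := by
        rw [Fintype.card_perm, Fintype.card_subtype_compl, Fintype.card_coe, card_pair hac]

lemma card_apply_eq_and_apply_eq {a c b d : α} (hac : a ≠ c) (hbd : b ≠ d) :
    #{σ : Perm α | σ a = b ∧ σ c = d} = (Fintype.card α - 2)! := by
  obtain ⟨τ, hτ⟩ := exists_extending_pair ![a, c] ![b, d]
    (by simp [Function.Injective, Fin.forall_fin_two, hac, hac.symm])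
    (by simp [Function.Injective, Fin.forall_fin_two, hbd, hbd.symm])
  have hτa : τ a = b := hτ 0
  have hτc : τ c = d := hτ 1
  rw [← card_apply_eq_self_and_apply_eq_self hac]
  refine card_equiv (Equiv.mulLeft τ⁻¹) fun σ => ?_
  simp [← hτa, ← hτc, Equiv.symm_apply_eq, eq_comm (a := σ _)]

lemma card_val_apply_eq_val_apply_add_one {n : ℕ} {i j : Fin n} (hij : i ≠ j) :
    #{τ : Perm (Fin n) | (τ j : ℕ) = τ i + 1} = (n - 1) * (n - 2)! := by
  obtain ⟨m, rfl⟩ : ∃ m, n = m + 1 := ⟨n - 1, by have := i.2; omega⟩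
  have hmaps : ∀ τ ∈ ({τ : Perm (Fin (m + 1)) | (τ j : ℕ) = τ i + 1} : Finset _),
      τ i ∈ univ.erase (Fin.last m) := by
    intro τ hτ
    simp only [mem_filter, mem_univ, true_and] at hτ
    simp only [mem_erase, mem_univ, and_true, Fin.ne_iff_vne, Fin.val_last]
    have := (τ j).2
    omega
  have hfiber : ∀ v ∈ univ.erase (Fin.last m),
      #{τ ∈ ({τ : Perm (Fin (m + 1)) | (τ j : ℕ) = τ i + 1} : Finset _) | τ i = v} =
        (m + 1 - 2)! := by
    intro v hv
    have hv : (v : ℕ) + 1 < m + 1 := by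
      simp only [mem_erase, Fin.ne_iff_vne, Fin.val_last] at hv
      have := v.2
      omega
    have hpair := card_apply_eq_and_apply_eq (b := v) (d := ⟨v + 1, hv⟩) hij
      (by simp [Fin.ext_iff])
    rw [Fintype.card_fin] at hpair
    rw [filter_filter, ← hpair]
    congr 1; ext τ
    simp only [mem_filter, mem_univ, true_and, Fin.ext_iff]
    omega
  rw [card_eq_sum_card_fiberwise hmaps, sum_const_nat hfiber]
  simp

end Equiv.Perm

lemma Fin.swap_lt_swap_iff_of_val_eq_add_one {n : ℕ} {u v a b : Fin n} (huv : (v : ℕ) = u + 1)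
    (hab : ¬(a = u ∧ b = v)) (hba : ¬(a = v ∧ b = u)) :
    swap u v a < swap u v b ↔ a < b := by
  simp only [Fin.lt_def, swap_apply_def]
  split_ifs <;> simp_all [Fin.ext_iff] <;> omega

section Descents

variable {n : ℕ}

def descentSet (σ : Perm (Fin n)) : Finset (Fin n × Fin n) :=
  {p | (p.2 : ℕ) = p.1 + 1 ∧ σ p.2 < σ p.1}

lemma desCount_eq_card_descentSet (σ : Perm (Fin n)) : desCount σ = #(descentSet σ) := rfl

lemma descentSet_mul_swap {τ : Perm (Fin n)} {i j : Fin n} (hij : (j : ℕ) = i + 1)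
    (hτ : (τ j : ℕ) = τ i + 1) : descentSet (τ * swap i j) = insert (i, j) (descentSet τ) := by
  ext ⟨x, y⟩
  simp only [descentSet, mul_swap_eq_swap_mul, mem_insert, mem_filter, mem_univ, true_and,
    Prod.mk.injEq, Perm.mul_apply]
  by_cases hxy : x = i ∧ y = j
  · obtain ⟨rfl, rfl⟩ := hxy
    simp [hij, Fin.lt_def, hτ]
  · rw [or_iff_right hxy]
    refine and_congr_right fun hyx => Fin.swap_lt_swap_iff_of_val_eq_add_one hτ ?_ ?_
    · simp only [τ.injective.eq_iff]; rintro ⟨rfl, rfl⟩; omega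
    · simp only [τ.injective.eq_iff]; rintro ⟨rfl, rfl⟩; exact hxy ⟨rfl, rfl⟩

lemma desCount_mul_swap {τ : Perm (Fin n)} {i j : Fin n} (hij : (j : ℕ) = i + 1)
    (hτ : (τ j : ℕ) = τ i + 1) : desCount (τ * swap i j) = desCount τ + 1 := by
  rw [desCount_eq_card_descentSet, descentSet_mul_swap hij hτ, card_insert_of_notMem]
  · rfl
  simp only [descentSet, mem_filter, mem_univ, true_and, Fin.lt_def, not_and, not_lt]
  omega

lemma sum_desCount_inv_eq_sum_desCount_inv_swap {i j : Fin n} (hij : (j : ℕ) = i + 1) :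
    ∑ σ ∈ {σ : Perm (Fin n) | (σ⁻¹ i : ℕ) = σ⁻¹ j + 1}, (desCount σ⁻¹ : ℤ) =
      ∑ σ ∈ {σ : Perm (Fin n) | (σ⁻¹ j : ℕ) = σ⁻¹ i + 1}, ((desCount σ⁻¹ : ℤ) + 1) := by
  refine (sum_equiv (Equiv.mulLeft (swap i j)) (fun σ => ?_) fun σ hσ => ?_).symm
  · simp only [mem_filter, mem_univ, true_and, coe_mulLeft, mul_inv_rev, swap_inv,
      Perm.mul_apply, swap_apply_left, swap_apply_right]
  · simp only [mem_filter, mem_univ, true_and] at hσ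
    simp [mul_inv_rev, desCount_mul_swap hij hσ]

end Descents

theorem stmt_18_general (n : ℕ) (i j : Fin n) (hij : (j : ℕ) = (i : ℕ) + 1) :
    ∑ σ ∈ Finset.univ.filter
        (fun σ : Equiv.Perm (Fin n) => ((σ⁻¹ j : Fin n) : ℕ) = ((σ⁻¹ i : Fin n) : ℕ) + 1),
      (desCount σ⁻¹ : ℤ) =
    (∑ σ ∈ Finset.univ.filter
        (fun σ : Equiv.Perm (Fin n) => ((σ⁻¹ i : Fin n) : ℕ) = ((σ⁻¹ j : Fin n) : ℕ) + 1),
      (desCount σ⁻¹ : ℤ)) - ((n - 2).factorial : ℤ) * ((n : ℤ) - 1) := by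
  have hne : i ≠ j := fun h => by rw [h] at hij; omega
  have hcard : #{σ : Perm (Fin n) | (σ⁻¹ j : ℕ) = σ⁻¹ i + 1} = (n - 1) * (n - 2)! := by
    rw [← Perm.card_val_apply_eq_val_apply_add_one hne]
    exact card_equiv (Equiv.inv _) (by simp)
  rw [sum_desCount_inv_eq_sum_desCount_inv_swap hij, sum_add_distrib, sum_const, hcard,
    nsmul_one]
  push_cast [Nat.cast_sub (show 1 ≤ n by have := i.2; omega)]
  ring

theorem stmt_18 (n : ℕ) (hn : 3 ≤ n) (i j : Fin n) (hij : (j : ℕ) = (i : ℕ) + 1) :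
    ∑ σ ∈ Finset.univ.filter
        (fun σ : Equiv.Perm (Fin n) => ((σ⁻¹ j : Fin n) : ℕ) = ((σ⁻¹ i : Fin n) : ℕ) + 1),
      (desCount σ⁻¹ : ℤ) =
    (∑ σ ∈ Finset.univ.filter
        (fun σ : Equiv.Perm (Fin n) => ((σ⁻¹ i : Fin n) : ℕ) = ((σ⁻¹ j : Fin n) : ℕ) + 1),
      (desCount σ⁻¹ : ℤ)) - ((n - 2).factorial : ℤ) * ((n : ℤ) - 1) :=
  stmt_18_general n i j hij
end
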